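/- arXiv:2206.05248 — 10 statements merged into one kernel-verified Lean document; each statement's English description precedes it below -/
import Mathlib

section
/- Let (a_k)_{k≥2} be a sequence of nonnegative reals, C₁ ≥ 0, and p ∈ (0, 1/3). If for every k ≥ 2 we have (k²/4)·a_k ≤ C₁ + (p/(1-p))·∑_{t=2}^{k-1} a_t, then for every k ≥ 2, a_k ≤ (4C₁/(1-3p))·(1/k²). -/
/-!
Put `M = 4 C₁ / (1 - 3p)`; this is the value for which `C₁ + p/(1-p) (C₁ + M/2) = M/4`.
By strong induction `a_k ≤ M / k²`: the inductive hypothesis and `a₂ ≤ C₁` bound the sum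
`∑_{t<k} a_t` by `C₁ + M ∑_{t≥3} 1/t² ≤ C₁ + M/2`, and the recursion then gives `k²/4 · a_k ≤ M/4`.
-/

open Finset

lemma one_div_sq_le_one_div_sub_one_sub_one_div {x : ℝ} (hx : 1 < x) :
    1 / x ^ 2 ≤ 1 / (x - 1) - 1 / x := by
  have hdiff : 1 / (x - 1) - 1 / x = 1 / ((x - 1) * x) := by
    field_simp [(by linarith : x - 1 ≠ 0)]
    ring
  rw [hdiff]
  exact one_div_le_one_div_of_le (by nlinarith) (by nlinarith)

lemma sum_Ico_one_div_sq_le {m n : ℕ} (hm : 2 ≤ m) (hmn : m ≤ n) :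
    ∑ t ∈ Ico m n, 1 / (t : ℝ) ^ 2 ≤ 1 / ((m : ℝ) - 1) - 1 / ((n : ℝ) - 1) := by
  induction n, hmn using Nat.le_induction with
  | base => simp
  | succ n hmn ih =>
    have hn : (1 : ℝ) < n := by exact_mod_cast (by omega : 1 < n)
    have hstep := one_div_sq_le_one_div_sub_one_sub_one_div hn
    rw [sum_Ico_succ_top hmn, Nat.cast_succ, add_sub_cancel_right]
    linarith

lemma sum_Ico_three_one_div_sq_le_half (n : ℕ) :
    ∑ t ∈ Ico 3 n, 1 / (t : ℝ) ^ 2 ≤ 1 / 2 := by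
  rcases lt_or_ge n 3 with hn | hn
  · simp [Ico_eq_empty_of_le hn.le]
  · have hsum := sum_Ico_one_div_sq_le (by norm_num) hn
    have hn3 : (3 : ℝ) ≤ n := by exact_mod_cast hn
    have hn1 : (0 : ℝ) ≤ 1 / ((n : ℝ) - 1) := one_div_nonneg.mpr (by linarith)
    rw [Nat.cast_ofNat, (by norm_num : (3 : ℝ) - 1 = 2)] at hsum
    linarith

lemma add_div_one_sub_mul_add_half_eq {C p M : ℝ} (hp : p ≠ 1) (hM : 4 * C = (1 - 3 * p) * M) :
    C + p / (1 - p) * (C + M / 2) = M / 4 := by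
  field_simp [sub_ne_zero.mpr hp.symm]
  linarith

lemma sum_Ico_two_le_of_le_div_sq {a : ℕ → ℝ} {C M : ℝ} {k : ℕ} (hk : 3 ≤ k) (hM : 0 ≤ M)
    (h2 : a 2 ≤ C) (ht : ∀ t ∈ Ico 3 k, a t ≤ M / (t : ℝ) ^ 2) :
    ∑ t ∈ Ico 2 k, a t ≤ C + M / 2 := by
  rw [sum_eq_sum_Ico_succ_bot (by omega : 2 < k)]
  have htail : ∑ t ∈ Ico 3 k, a t ≤ M / 2 :=
    calc ∑ t ∈ Ico 3 k, a t ≤ ∑ t ∈ Ico 3 k, M * (1 / (t : ℝ) ^ 2) :=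
          sum_le_sum fun t h ↦ (mul_one_div M _).symm ▸ ht t h
      _ = M * ∑ t ∈ Ico 3 k, 1 / (t : ℝ) ^ 2 := (mul_sum _ _ _).symm
      _ ≤ M * (1 / 2) := mul_le_mul_of_nonneg_left (sum_Ico_three_one_div_sq_le_half k) hM
      _ = M / 2 := mul_one_div M 2
  linarith

lemma le_div_sq_of_sq_mul_le_add_sum {a : ℕ → ℝ} {C p M : ℝ} (hp0 : 0 ≤ p) (hp1 : p < 1)
    (hM0 : 0 ≤ M) (hM : 4 * C = (1 - 3 * p) * M)
    (hrec : ∀ k : ℕ, 2 ≤ k → (k : ℝ) ^ 2 / 4 * a k ≤ C + p / (1 - p) * ∑ t ∈ Ico 2 k, a t)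
    (k : ℕ) (hk : 2 ≤ k) : a k ≤ M / (k : ℝ) ^ 2 := by
  have ha2 : a 2 ≤ C := by
    have h2 := hrec 2 le_rfl
    simp only [Ico_self, sum_empty, mul_zero, add_zero, Nat.cast_ofNat] at h2
    linarith
  induction k using Nat.strong_induction_on with
  | _ k ih =>
    rcases hk.eq_or_lt with rfl | hk3
    · have hCM : 4 * C ≤ M := by nlinarith
      norm_num
      linarith
    · have hsum := sum_Ico_two_le_of_le_div_sq hk3 hM0 ha2
        fun t ht ↦ ih t (mem_Ico.mp ht).2 (by linarith [(mem_Ico.mp ht).1])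
      have hk2 : (0 : ℝ) < (k : ℝ) ^ 2 := by positivity
      have hquarter : (k : ℝ) ^ 2 / 4 * a k ≤ M / 4 :=
        calc (k : ℝ) ^ 2 / 4 * a k ≤ C + p / (1 - p) * ∑ t ∈ Ico 2 k, a t := hrec k hk
          _ ≤ C + p / (1 - p) * (C + M / 2) := by gcongr
          _ = M / 4 := add_div_one_sub_mul_add_half_eq hp1.ne hM
      rw [le_div_iff₀ hk2]
      linarith

theorem stmt_0_general (a : ℕ → ℝ) (C₁ p : ℝ)
    (hC : 0 ≤ C₁) (hp0 : 0 < p) (hp1 : p < 1/3)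
    (hrec : ∀ k : ℕ, 2 ≤ k →
      (k : ℝ)^2 / 4 * a k ≤ C₁ + p / (1 - p) * ∑ t ∈ Finset.Ico 2 k, a t) :
    ∀ k : ℕ, 2 ≤ k → a k ≤ 4 * C₁ / (1 - 3 * p) * (1 / (k : ℝ)^2) := by
  have h3p : 0 < 1 - 3 * p := by linarith
  have hM : 4 * C₁ = (1 - 3 * p) * (4 * C₁ / (1 - 3 * p)) := by field_simp
  intro k hk
  rw [mul_one_div]
  exact le_div_sq_of_sq_mul_le_add_sum hp0.le (by linarith) (by positivity) hM hrec k hk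

theorem stmt_0 (a : ℕ → ℝ) (C₁ p : ℝ)
    (ha : ∀ k : ℕ, 2 ≤ k → 0 ≤ a k)
    (hC : 0 ≤ C₁) (hp0 : 0 < p) (hp1 : p < 1/3)
    (hrec : ∀ k : ℕ, 2 ≤ k →
      (k : ℝ)^2 / 4 * a k ≤ C₁ + p / (1 - p) * ∑ t ∈ Finset.Ico 2 k, a t) :
    ∀ k : ℕ, 2 ≤ k → a k ≤ 4 * C₁ / (1 - 3 * p) * (1 / (k : ℝ)^2) :=
  stmt_0_general a C₁ p hC hp0 hp1 hrec
end

section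
/- Let F : ℝⁿ → ℝⁿ be monotone and L-Lipschitz, with F(z*) = 0. Define the unconstrained EAG iterates z_{k+1/2} = z_k − ηF(z_k) + (1/(k+1))(z₀ − z_k), z_{k+1} = z_k − ηF(z_{k+1/2}) + (1/(k+1))(z₀ − z_k) with step size η ∈ (0, 1/L), and the potential V_k = (k(k+1)/2)‖ηF(z_k)‖² + k⟨ηF(z_k), z_k − z₀⟩. Then for all k ≥ 1, V_{k+1} ≤ V_k + (η²L²/(1−η²L²))·‖ηF(z_{k+1})‖². -/
open RealInnerProductSpace
set_option maxHeartbeats 1000000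

lemma eag_key (K t A B C pab pbc pad pcd nb nc : ℝ)
    (hK : 1 ≤ K) (ht0 : 0 < t) (ht1 : t < 1)
    (hB : B = nb^2) (hC : C = nc^2)
    (hbc1 : pbc ≤ nb*nc) (hbc2 : -(nb*nc) ≤ pbc)
    (hba : 0 ≤ B - 2*pab + A)
    (hmono : (K+1)*(pbc - pab) + (pcd - pad) ≤ 0)
    (hlip : B - 2*pbc + C ≤ t*(B - 2*pab + A)) :
    (K+1)*(K+2)/2*C + K*pcd - (K+1)*pbc ≤ K*(K+1)/2*A + K*pad + t/(1-t)*C := by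
  have h1t : 0 < 1 - t := by linarith
  have hM4 : 0 ≤ ((K+1)*(1-t)-2*t)^2*C - (2*((K+1)*(1-t)-2*t)*((K+1)*(1-t)))*pbc
      + ((K+1)*(1-t))^2*B := by
    set e := (K+1)*(1-t)-2*t with he
    set f := (K+1)*(1-t) with hf
    rcases le_or_gt 0 (e*f) with h | h
    · nlinarith [sq_nonneg (e*nc - f*nb), mul_nonneg h (sub_nonneg.2 hbc1)]
    · nlinarith [sq_nonneg (e*nc + f*nb), mul_nonneg (by linarith : (0:ℝ) ≤ -(e*f)) (by linarith : (0:ℝ) ≤ pbc + nb*nc)]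
  have hM1 : 4*t*(1-t)*K*((K+1)*(pbc - pab) + (pcd - pad)) ≤ 0 := by
    have h0 : (0:ℝ) ≤ 4*t*(1-t)*K := by positivity
    exact mul_nonpos_of_nonneg_of_nonpos h0 hmono
  have hM2 : 0 ≤ ((K+1)^2*(1-t)^2 + 2*K*(K+1)*t*(1-t)) * (t*(B - 2*pab + A) - (B - 2*pbc + C)) := by
    have h2 : 0 ≤ (K+1)^2*(1-t)^2 + 2*K*(K+1)*t*(1-t) := by positivity
    exact mul_nonneg h2 (by linarith)
  have hM3 : 0 ≤ (t*(1-t)^2*(K+1)*(K-1)) * (B - 2*pab + A) := by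
    have : 0 ≤ t*(1-t)^2*(K+1)*(K-1) := by
      have : 0 ≤ K - 1 := by linarith
      positivity
    exact mul_nonneg this hba
  have P : 4*t*(1-t)*(((K+1)*(K+2)/2*C + K*pcd - (K+1)*pbc) - (K*(K+1)/2*A + K*pad))
      ≤ 4*t^2*C := by linarith [hM1, hM2, hM3, hM4]
  have goal' : ((K+1)*(K+2)/2*C + K*pcd - (K+1)*pbc) - (K*(K+1)/2*A + K*pad) ≤ t/(1-t)*C := by
    have h4 : (0:ℝ) < 4*t := by positivity
    have P' : (4*t)*((((K+1)*(K+2)/2*C + K*pcd - (K+1)*pbc) - (K*(K+1)/2*A + K*pad))*(1-t)) ≤ (4*t)*(t*C) := by linarith [P]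
    have P2 := le_of_mul_le_mul_left P' h4
    rw [show t/(1-t)*C = t*C/(1-t) by ring, le_div_iff₀ h1t]
    linarith [P2]
  linarith

theorem stmt_6 {n : ℕ}
    (F : EuclideanSpace ℝ (Fin n) → EuclideanSpace ℝ (Fin n))
    (L η : ℝ) (hL : 0 < L)
    (hmono : ∀ z z', 0 ≤ ⟪F z - F z', z - z'⟫)
    (hlip : ∀ z z', ‖F z - F z'‖ ≤ L * ‖z - z'‖)
    (zstar : EuclideanSpace ℝ (Fin n)) (hzstar : F zstar = 0)
    (hη : 0 < η) (hηL : η < 1 / L)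
    (z zh : ℕ → EuclideanSpace ℝ (Fin n))
    (hzh : ∀ k : ℕ, zh k = z k - η • F (z k) + (1/((k:ℝ)+1)) • (z 0 - z k))
    (hz : ∀ k : ℕ, z (k+1) = z k - η • F (zh k) + (1/((k:ℝ)+1)) • (z 0 - z k))
    (V : ℕ → ℝ)
    (hV : ∀ k : ℕ, V k = (k:ℝ)*((k:ℝ)+1)/2 * ‖η • F (z k)‖^2
      + (k:ℝ) * ⟪η • F (z k), z k - z 0⟫) :
    ∀ k : ℕ, 1 ≤ k →
      V (k+1) ≤ V k + η^2*L^2/(1-η^2*L^2) * ‖η • F (z (k+1))‖^2 := by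
  intro k hk
  set K : ℝ := (k:ℝ) with hKdef
  have hK1 : (1:ℝ) ≤ K := by rw [hKdef]; exact_mod_cast hk
  have hK1' : (0:ℝ) < K + 1 := by linarith
  have hne : K + 1 ≠ 0 := ne_of_gt hK1'
  set a := η • F (z k) with ha
  set b := η • F (zh k) with hb
  set c := η • F (z (k+1)) with hc
  set d := z k - z 0 with hd
  have hηL1 : η * L < 1 := by
    rw [lt_div_iff₀ hL] at hηL; exact hηL
  set t := (η*L)^2 with ht
  have ht0 : 0 < t := by positivity
  have ht1 : t < 1 := by nlinarith [mul_pos hη hL]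
  have hd0 : z 0 - z k = -d := by rw [hd]; abel
  -- vector identities
  have hv1 : z (k+1) - z k = -b - (1/(K+1)) • d := by
    rw [hz k, hd0]; module
  have hv2 : zh k - z (k+1) = b - a := by
    rw [hzh k, hz k]; abel
  have hv3 : z (k+1) - z 0 = (d - (1/(K+1)) • d) - b := by
    rw [hz k, hd0, hd]; module
  -- monotonicity scalar inequality
  have hmono_s : (K+1)*(⟪b,c⟫ - ⟪a,b⟫) + (⟪c,d⟫ - ⟪a,d⟫) ≤ 0 := by
    have hca : c - a = η • (F (z (k+1)) - F (z k)) := by rw [ha, hc, smul_sub]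
    have h1 : 0 ≤ ⟪c - a, z (k+1) - z k⟫ := by
      rw [hca, real_inner_smul_left]
      exact mul_nonneg hη.le (hmono (z (k+1)) (z k))
    have hv1' : (K+1) • (z (k+1) - z k) = -((K+1) • b) - d := by
      rw [hv1]
      match_scalars <;> field_simp
    have h2 : 0 ≤ ⟪c - a, -((K+1) • b) - d⟫ := by
      rw [← hv1', real_inner_smul_right]
      exact mul_nonneg hK1'.le h1
    simp only [inner_sub_left, inner_sub_right, inner_neg_right, real_inner_smul_right] at h2
    have e1 : ⟪c, b⟫ = ⟪b, c⟫ := real_inner_comm b c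
    rw [e1] at h2
    linarith [h2]
  -- Lipschitz scalar inequality
  have hlip_s : ‖b‖^2 - 2*⟪b,c⟫ + ‖c‖^2 ≤ t*(‖b‖^2 - 2*⟪a,b⟫ + ‖a‖^2) := by
    have hbc : b - c = η • (F (zh k) - F (z (k+1))) := by rw [hb, hc, smul_sub]
    have h1 : ‖b - c‖ ≤ η * L * ‖b - a‖ := by
      calc ‖b - c‖ = η * ‖F (zh k) - F (z (k+1))‖ := by
            rw [hbc, norm_smul, Real.norm_eq_abs, abs_of_pos hη]
        _ ≤ η * (L * ‖zh k - z (k+1)‖) :=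
            mul_le_mul_of_nonneg_left (hlip (zh k) (z (k+1))) hη.le
        _ = η * L * ‖b - a‖ := by rw [hv2]; ring
    have h2 : ‖b - c‖^2 ≤ (η * L * ‖b - a‖)^2 := by
      exact pow_le_pow_left₀ (norm_nonneg (b - c)) h1 2
    have e1 : ‖b - c‖^2 = ‖b‖^2 - 2*⟪b,c⟫ + ‖c‖^2 := by
      rw [norm_sub_sq_real]
    have e2 : ‖b - a‖^2 = ‖b‖^2 - 2*⟪a,b⟫ + ‖a‖^2 := by
      rw [norm_sub_sq_real, real_inner_comm]
    rw [ht]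
    nlinarith [h2, e1, e2]
  -- rewrite the potentials
  have hVk : V k = K*(K+1)/2*‖a‖^2 + K*⟪a,d⟫ := by
    rw [hV k, ← ha, ← hd]
  have hVk1 : V (k+1) = (K+1)*(K+2)/2*‖c‖^2 + K*⟪c,d⟫ - (K+1)*⟪b,c⟫ := by
    have h0 := hV (k+1)
    push_cast at h0
    rw [← hc, hv3] at h0
    simp only [inner_sub_right, real_inner_smul_right] at h0
    have e3 : ∀ X Y C2 : ℝ, (K+1)*((K+1)+1)/2*C2 + (K+1)*(X - 1/(K+1)*X - Y)
        = (K+1)*(K+2)/2*C2 + K*X - (K+1)*Y := by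
      intro X Y C2; field_simp; ring
    rw [h0, ← real_inner_comm c b]
    linarith [e3 ⟪c,d⟫ ⟪b,c⟫ (‖c‖^2)]
  have hba : 0 ≤ ‖b‖^2 - 2*⟪a,b⟫ + ‖a‖^2 := by
    have e2 : ‖b - a‖^2 = ‖b‖^2 - 2*⟪a,b⟫ + ‖a‖^2 := by
      rw [norm_sub_sq_real, real_inner_comm]
    rw [← e2]; positivity
  have hbc1 : ⟪b,c⟫ ≤ ‖b‖*‖c‖ := real_inner_le_norm b c
  have hbc2 : -(‖b‖*‖c‖) ≤ ⟪b,c⟫ := by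
    have := abs_real_inner_le_norm b c
    cases' abs_le.mp this with h1 h2
    linarith
  have htg : η^2*L^2 = t := by rw [ht]; ring
  rw [hVk, hVk1, htg]
  have key := eag_key K t (‖a‖^2) (‖b‖^2) (‖c‖^2) ⟪a,b⟫ ⟪b,c⟫ ⟪a,d⟫ ⟪c,d⟫ ‖b‖ ‖c‖
    hK1 ht0 ht1 rfl rfl hbc1 hbc2 hba hmono_s hlip_s
  linarith [key]
end

section
/- Under the setting of the unconstrained EAG potential decrease (monotone L-Lipschitz F with a zero z*, step size η ∈ (0, 1/(√3 L))), for all k ≥ 2: (k²/4)·‖ηF(z_k)‖² ≤ (1+ηL)²‖z₀ − z*‖² + (η²L²/(1−η²L²))·∑_{t=2}^{k−1} ‖ηF(z_t)‖². -/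
/-!
With `G = η • F` and `ℓ = η L`, the potential
`V_k = k(k+1)/2 ‖G z_k‖² + k ⟪G z_k, z_k - z_0⟫` grows per step by at most
`ℓ²/(1-ℓ²) ‖G z_{k+1}‖²`; this one-step bound has an explicit sum-of-squares certificate built
from monotonicity and Lipschitz continuity. Telescoping from `V_1 ≤ (2ℓ + ℓ²) ‖z_0 - z*‖²` and
the lower bound `V_k ≥ k(k+1)/4 ‖G z_k‖² - ‖z_0 - z*‖²` (monotonicity at `z*` and Young's
inequality) gives the claim; the surplus `k/4 ‖G z_k‖²` absorbs the last term of the sum because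
`ℓ²/(1-ℓ²) ≤ 1/2`.
-/

open RealInnerProductSpace Finset

lemma le_add_mul_sum_of_succ_le {a b : ℕ → ℝ} {c : ℝ} {m : ℕ}
    (h : ∀ k, m ≤ k → a (k + 1) ≤ a k + c * b (k + 1)) {k : ℕ} (hk : m ≤ k) :
    a k ≤ a m + c * ∑ t ∈ Ico (m + 1) (k + 1), b t := by
  induction k, hk using Nat.le_induction with
  | base => simp
  | succ k hmk ih =>
    rw [sum_Ico_succ_top (by omega), mul_add]
    linarith [h k hmk]

section EAG

variable {E : Type*} [NormedAddCommGroup E] [InnerProductSpace ℝ E]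

/-- The step from `V_k` to `V_{k+1}`, with `a = G z_k`, `b = G ẑ_k`, `c = G z_{k+1}`,
`d = z_k - z_0`, `K = k` and `s = ℓ²`. -/
lemma eagPotential_step_aux (a b c d : E) {K s : ℝ} (hK : 1 ≤ K) (hs : 0 < s) (hs3 : s < 1 / 3)
    (hlip : ‖c - b‖ ^ 2 ≤ s * ‖a - b‖ ^ 2)
    (hmono : 0 ≤ ⟪a - c, b + (1 / (K + 1)) • d⟫) :
    (K + 1) * (K + 2) / 2 * ‖c‖ ^ 2 + K * ⟪c, d⟫ - (K + 1) * ⟪c, b⟫ ≤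
      K * (K + 1) / 2 * ‖a‖ ^ 2 + K * ⟪a, d⟫ + s / (1 - s) * ‖c‖ ^ 2 := by
  have hs1 : 0 < 1 - s := by linarith
  set p := (K + 1) * (1 - s)
  set q := 2 * s - (K + 1) * (1 - s)
  have hpq : ‖p • b + q • c‖ ^ 2 = p ^ 2 * ‖b‖ ^ 2 + 2 * (p * q) * ⟪c, b⟫ + q ^ 2 * ‖c‖ ^ 2 := by
    rw [norm_add_sq_real, norm_smul, norm_smul, real_inner_smul_left, real_inner_smul_right,
      real_inner_comm, Real.norm_eq_abs, Real.norm_eq_abs, mul_pow, mul_pow, sq_abs, sq_abs]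
    ring
  have hmono_expand : ⟪a - c, b + (1 / (K + 1)) • d⟫
      = ⟪a, b⟫ - ⟪c, b⟫ + 1 / (K + 1) * (⟪a, d⟫ - ⟪c, d⟫) := by
    rw [inner_add_right, inner_sub_left, inner_sub_left, real_inner_smul_right,
      real_inner_smul_right]
    ring
  -- sum-of-squares certificate for the gap between the two sides
  have key : (K * (K + 1) / 2 * ‖a‖ ^ 2 + K * ⟪a, d⟫ + s / (1 - s) * ‖c‖ ^ 2)
      - ((K + 1) * (K + 2) / 2 * ‖c‖ ^ 2 + K * ⟪c, d⟫ - (K + 1) * ⟪c, b⟫)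
      = (1 - s) * (K + 1) * (K - 1) / 4 * ‖a - b‖ ^ 2
        + 1 / (4 * s * (1 - s)) * ‖p • b + q • c‖ ^ 2
        + (K * (K + 1) / 2 + (K + 1) ^ 2 * (1 - s) / (4 * s)) * (s * ‖a - b‖ ^ 2 - ‖c - b‖ ^ 2)
        + K * (K + 1) * ⟪a - c, b + (1 / (K + 1)) • d⟫ := by
    rw [norm_sub_sq_real a b, norm_sub_sq_real c b, hpq, hmono_expand]
    field_simp
    ring
  have hK0 : 0 ≤ K - 1 := by linarith
  have hgap : 0 ≤ s * ‖a - b‖ ^ 2 - ‖c - b‖ ^ 2 := by linarith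
  rw [← sub_nonneg, key]
  have := mul_nonneg (mul_nonneg (mul_nonneg hs1.le (by linarith : 0 ≤ K + 1)) hK0)
    (sq_nonneg ‖a - b‖)
  have := mul_nonneg (by positivity : 0 ≤ K * (K + 1) / 2 + (K + 1) ^ 2 * (1 - s) / (4 * s)) hgap
  have := mul_nonneg (by positivity : 0 ≤ K * (K + 1)) hmono
  have : 0 ≤ 1 / (4 * s * (1 - s)) * ‖p • b + q • c‖ ^ 2 := by positivity
  linarith

noncomputable def eagPotential (G : E → E) (z : ℕ → E) (k : ℕ) : ℝ :=
  k * (k + 1) / 2 * ‖G (z k)‖ ^ 2 + k * ⟪G (z k), z k - z 0⟫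

variable {G : E → E} {ℓ : ℝ} {z zh : ℕ → E}

lemma eagPotential_succ_le (hmono : ∀ x y, 0 ≤ ⟪G x - G y, x - y⟫)
    (hlip : ∀ x y, ‖G x - G y‖ ≤ ℓ * ‖x - y‖) (hℓ : 0 < ℓ) (hℓ3 : 3 * ℓ ^ 2 < 1)
    (hzh : ∀ k : ℕ, zh k = z k - G (z k) + (1 / ((k : ℝ) + 1)) • (z 0 - z k))
    (hz : ∀ k : ℕ, z (k + 1) = z k - G (zh k) + (1 / ((k : ℝ) + 1)) • (z 0 - z k))
    {k : ℕ} (hk : 1 ≤ k) :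
    eagPotential G z (k + 1) ≤ eagPotential G z k + ℓ ^ 2 / (1 - ℓ ^ 2) * ‖G (z (k + 1))‖ ^ 2 := by
  have hK : (1 : ℝ) ≤ k := by exact_mod_cast hk
  have hlip_sq : ‖G (z (k + 1)) - G (zh k)‖ ^ 2 ≤ ℓ ^ 2 * ‖G (z k) - G (zh k)‖ ^ 2 := by
    have hdiff : z (k + 1) - zh k = G (z k) - G (zh k) := by rw [hz k, hzh k]; module
    rw [← mul_pow, ← hdiff]
    exact pow_le_pow_left₀ (norm_nonneg _) (hlip _ _) 2
  have hmono_step :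
      0 ≤ ⟪G (z k) - G (z (k + 1)), G (zh k) + (1 / ((k : ℝ) + 1)) • (z k - z 0)⟫ := by
    have hdiff : z k - z (k + 1) = G (zh k) + (1 / ((k : ℝ) + 1)) • (z k - z 0) := by
      rw [hz k]; module
    rw [← hdiff]
    exact hmono _ _
  have hnext : z (k + 1) - z 0 = (1 - 1 / ((k : ℝ) + 1)) • (z k - z 0) - G (zh k) := by
    rw [hz k]; module
  have := eagPotential_step_aux (G (z k)) (G (zh k)) (G (z (k + 1))) (z k - z 0) hK
    (by positivity) (by linarith) hlip_sq hmono_step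
  have hV : eagPotential G z (k + 1) = ((k : ℝ) + 1) * (k + 2) / 2 * ‖G (z (k + 1))‖ ^ 2
      + k * ⟪G (z (k + 1)), z k - z 0⟫ - (k + 1) * ⟪G (z (k + 1)), G (zh k)⟫ := by
    rw [eagPotential, hnext, inner_sub_right, real_inner_smul_right]
    push_cast
    field_simp
    ring
  rw [hV, eagPotential]
  exact this

lemma eagPotential_ge (hmono : ∀ x y, 0 ≤ ⟪G x - G y, x - y⟫) {zstar : E} (hzstar : G zstar = 0)
    (k : ℕ) :
    k * (k + 1) / 4 * ‖G (z k)‖ ^ 2 - ‖z 0 - zstar‖ ^ 2 ≤ eagPotential G z k := by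
  set u := ‖G (z k)‖
  set D := ‖z 0 - zstar‖
  have hsplit : ⟪G (z k), z k - z 0⟫
      = ⟪G (z k) - G zstar, z k - zstar⟫ + ⟪G (z k), zstar - z 0⟫ := by
    rw [hzstar, sub_zero, ← inner_add_right]
    congr 1
    abel
  have hcs : -(u * D) ≤ ⟪G (z k), zstar - z 0⟫ := by
    have h := abs_real_inner_le_norm (G (z k)) (zstar - z 0)
    rw [norm_sub_rev] at h
    exact neg_le_of_abs_le h
  have hk : (0 : ℝ) ≤ k := Nat.cast_nonneg k
  have hyoung : k * (u * D) ≤ k * (k + 1) / 4 * u ^ 2 + D ^ 2 := by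
    nlinarith [sq_nonneg (k * u - 2 * D), mul_nonneg hk (sq_nonneg u)]
  rw [eagPotential, hsplit]
  nlinarith [mul_le_mul_of_nonneg_left hcs hk, mul_nonneg hk (hmono (z k) zstar)]

lemma eagPotential_one_le (hlip : ∀ x y, ‖G x - G y‖ ≤ ℓ * ‖x - y‖) (hℓ : 0 ≤ ℓ) (hℓ1 : ℓ ≤ 1)
    {zstar : E} (hzstar : G zstar = 0)
    (hzh : ∀ k : ℕ, zh k = z k - G (z k) + (1 / ((k : ℝ) + 1)) • (z 0 - z k))
    (hz : ∀ k : ℕ, z (k + 1) = z k - G (zh k) + (1 / ((k : ℝ) + 1)) • (z 0 - z k)) :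
    eagPotential G z 1 ≤ (2 * ℓ + ℓ ^ 2) * ‖z 0 - zstar‖ ^ 2 := by
  set D := ‖z 0 - zstar‖
  have hzh0 : zh 0 = z 0 - G (z 0) := by simpa using hzh 0
  have hz1 : z 1 = z 0 - G (zh 0) := by simpa using hz 0
  have h0 : ‖G (z 0)‖ ≤ ℓ * D := by simpa [hzstar] using hlip (z 0) zstar
  have h1 : ‖G (z 0) - G (zh 0)‖ ≤ ℓ * ‖G (z 0)‖ := by
    simpa [hzh0] using hlip (z 0) (zh 0)
  have h2 : ‖G (z 1) - G (zh 0)‖ ≤ ℓ * ‖G (z 0) - G (zh 0)‖ := by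
    simpa [hz1, hzh0] using hlip (z 1) (zh 0)
  have hD : 0 ≤ D := norm_nonneg _
  have e1 : ‖G (z 0) - G (zh 0)‖ ≤ ℓ ^ 2 * D :=
    h1.trans (by rw [sq, mul_assoc]; exact mul_le_mul_of_nonneg_left h0 hℓ)
  have e2 : ‖G (z 1) - G (zh 0)‖ ≤ ℓ ^ 3 * D :=
    h2.trans (by rw [pow_succ', mul_assoc]; exact mul_le_mul_of_nonneg_left e1 hℓ)
  have hz1_norm : ‖G (z 1)‖ ≤ 3 * (ℓ * D) := by
    have := norm_le_norm_add_norm_sub' (G (z 1)) (G (zh 0))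
    have := norm_le_norm_add_norm_sub' (G (zh 0)) (G (z 0))
    rw [norm_sub_rev] at this
    have := mul_le_mul_of_nonneg_right (pow_le_of_le_one hℓ hℓ1 (n := 2) (by norm_num)) hD
    have := mul_le_mul_of_nonneg_right (pow_le_of_le_one hℓ hℓ1 (n := 3) (by norm_num)) hD
    linarith
  have hV1 : eagPotential G z 1 = ⟪G (z 1), G (z 1) - G (zh 0)⟫ := by
    have hdiff : z 1 - z 0 = -G (zh 0) := by rw [hz1]; abel
    rw [eagPotential, hdiff, inner_neg_right, inner_sub_right, real_inner_self_eq_norm_sq]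
    push_cast
    ring
  have hℓ4 : 3 * ℓ ^ 4 ≤ 2 * ℓ + ℓ ^ 2 := by
    have := pow_le_of_le_one hℓ hℓ1 (n := 4) (by norm_num)
    have := pow_le_pow_of_le_one hℓ hℓ1 (show 2 ≤ 4 by norm_num)
    linarith
  calc eagPotential G z 1 ≤ ‖G (z 1)‖ * ‖G (z 1) - G (zh 0)‖ := hV1 ▸ real_inner_le_norm _ _
    _ ≤ 3 * (ℓ * D) * (ℓ ^ 3 * D) := mul_le_mul hz1_norm e2 (norm_nonneg _) (by positivity)
    _ = 3 * ℓ ^ 4 * D ^ 2 := by ring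
    _ ≤ (2 * ℓ + ℓ ^ 2) * D ^ 2 := by gcongr

theorem eag_sq_norm_le (hmono : ∀ x y, 0 ≤ ⟪G x - G y, x - y⟫)
    (hlip : ∀ x y, ‖G x - G y‖ ≤ ℓ * ‖x - y‖) (hℓ : 0 < ℓ) (hℓ3 : 3 * ℓ ^ 2 < 1)
    {zstar : E} (hzstar : G zstar = 0)
    (hzh : ∀ k : ℕ, zh k = z k - G (z k) + (1 / ((k : ℝ) + 1)) • (z 0 - z k))
    (hz : ∀ k : ℕ, z (k + 1) = z k - G (zh k) + (1 / ((k : ℝ) + 1)) • (z 0 - z k))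
    {k : ℕ} (hk : 2 ≤ k) :
    (k : ℝ) ^ 2 / 4 * ‖G (z k)‖ ^ 2 ≤
      (1 + ℓ) ^ 2 * ‖z 0 - zstar‖ ^ 2 + ℓ ^ 2 / (1 - ℓ ^ 2) * ∑ t ∈ Ico 2 k, ‖G (z t)‖ ^ 2 := by
  have hsum := le_add_mul_sum_of_succ_le (a := eagPotential G z) (b := fun t => ‖G (z t)‖ ^ 2)
    (fun j hj => eagPotential_succ_le hmono hlip hℓ hℓ3 hzh hz hj) (show 1 ≤ k by omega)
  rw [sum_Ico_succ_top (by omega), mul_add] at hsum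
  have hV1 := eagPotential_one_le hlip hℓ.le (by nlinarith) hzstar hzh hz
  have hVk := eagPotential_ge hmono hzstar (z := z) k
  have hσ : ℓ ^ 2 / (1 - ℓ ^ 2) ≤ k / 4 := by
    have hk' : (2 : ℝ) ≤ k := by exact_mod_cast hk
    rw [div_le_iff₀ (by linarith)]
    nlinarith
  have := mul_le_mul_of_nonneg_right hσ (sq_nonneg ‖G (z k)‖)
  linear_combination hVk + hsum + hV1 + this

end EAG

theorem stmt_7 {n : ℕ}
    (F : EuclideanSpace ℝ (Fin n) → EuclideanSpace ℝ (Fin n))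
    (L η : ℝ) (hL : 0 < L)
    (hmono : ∀ z z', 0 ≤ ⟪F z - F z', z - z'⟫)
    (hlip : ∀ z z', ‖F z - F z'‖ ≤ L * ‖z - z'‖)
    (zstar : EuclideanSpace ℝ (Fin n)) (hzstar : F zstar = 0)
    (hη : 0 < η) (hηL : η < 1 / (Real.sqrt 3 * L))
    (z zh : ℕ → EuclideanSpace ℝ (Fin n))
    (hzh : ∀ k : ℕ, zh k = z k - η • F (z k) + (1/((k:ℝ)+1)) • (z 0 - z k))
    (hz : ∀ k : ℕ, z (k+1) = z k - η • F (zh k) + (1/((k:ℝ)+1)) • (z 0 - z k)) :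
    ∀ k : ℕ, 2 ≤ k →
      (k:ℝ)^2/4 * ‖η • F (z k)‖^2 ≤
        (1 + η*L)^2 * ‖z 0 - zstar‖^2
          + η^2*L^2/(1-η^2*L^2) * ∑ t ∈ Finset.Ico 2 k, ‖η • F (z t)‖^2 := by
  intro k hk
  have hmono_smul : ∀ x y, 0 ≤ ⟪η • F x - η • F y, x - y⟫ := fun x y => by
    rw [← smul_sub, real_inner_smul_left]
    exact mul_nonneg hη.le (hmono x y)
  have hlip_smul : ∀ x y, ‖η • F x - η • F y‖ ≤ η * L * ‖x - y‖ := fun x y => by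
    rw [← smul_sub, norm_smul, Real.norm_of_nonneg hη.le, mul_assoc]
    exact mul_le_mul_of_nonneg_left (hlip x y) hη.le
  have hηL3 : 3 * (η * L) ^ 2 < 1 := by
    have h3 : Real.sqrt 3 ^ 2 = 3 := Real.sq_sqrt (by norm_num)
    have : η * L * Real.sqrt 3 < 1 := by
      rw [lt_div_iff₀ (by positivity)] at hηL
      linarith
    nlinarith [Real.sqrt_nonneg 3, mul_pos hη hL]
  have := eag_sq_norm_le (G := fun x => η • F x) hmono_smul hlip_smul (mul_pos hη hL) hηL3
    (zstar := zstar) (by simp [hzstar]) hzh hz hk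
  simpa only [mul_pow] using this
end

section
/- Let F : ℝⁿ → ℝⁿ be monotone and L-Lipschitz with a zero z*, let D = ‖z₀ − z*‖, and run unconstrained EAG with step size η ∈ (0, 1/(√3 L)). Then for all T ≥ 1, ‖F(z_T)‖² ≤ [4(1+ηL)²/(η²L²(1−3η²L²))]·(D²L²/T²). In particular, with η = 1/(3L), ‖F(z_T)‖² ≤ 96·D²L²/T². -/
/-!
The potential `V_k = η k² / 2 ‖F z_k‖² + k ⟪F z_k, z_k - z₀⟫` of the anchored iteration grows in one
step by at most `η c ‖F z_k‖²` with `c = η²L² / (2 (1 - η²L²))`: the slack is a combination of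
the monotonicity inequality at `(z_{k+1}, z_k)`, the Lipschitz inequality at `(z_{k+1}, z_{k+1/2})`
and a completed square. Monotonicity against `z*` and AM-GM bound `V_k` from below, which gives
`k²/4 ‖F z_k‖² ≤ D²/η² + c ∑_{t<k} ‖F z_t‖²`. After bounding the terms `t = 0, 1` by Lipschitz
continuity, this recursion is solved by strong induction using `∑_{t ≥ 2} 1/t² ≤ 1`.
-/

open RealInnerProductSpace Finset

theorem le_div_sq_of_sq_mul_le_add_sum_s8 {q : ℕ → ℝ} {p C : ℝ} (hp : 0 ≤ p) (hp3 : 3 * p < 1)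
    (hC : 0 ≤ C) (h1 : q 1 ≤ 4 * C)
    (hrec : ∀ k : ℕ, 2 ≤ k → (k : ℝ) ^ 2 / 4 * q k ≤ C + p / (2 * (1 - p)) * ∑ t ∈ Ico 2 k, q t) :
    ∀ k : ℕ, 1 ≤ k → q k ≤ 4 * C / ((1 - 3 * p) * (k : ℝ) ^ 2) := by
  have h3p : 0 < 1 - 3 * p := by linarith
  set M := 4 * C / (1 - 3 * p) with hM
  have hM0 : 0 ≤ M := by positivity
  suffices ∀ k : ℕ, 1 ≤ k → q k ≤ M / (k : ℝ) ^ 2 by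
    intro k hk; rw [← div_div]; exact this k hk
  intro k
  induction k using Nat.strong_induction_on with
  | _ k ih =>
  intro hk
  obtain rfl | hk2 := eq_or_lt_of_le hk
  · calc q 1 ≤ 4 * C := h1
      _ ≤ M := le_div_self (by positivity) h3p (by linarith)
      _ = M / ((1 : ℕ) : ℝ) ^ 2 := by simp
  have hsum : ∑ t ∈ Ico 2 k, q t ≤ M :=
    calc ∑ t ∈ Ico 2 k, q t ≤ ∑ t ∈ Ico 2 k, M * ((t : ℝ) ^ 2)⁻¹ :=
          sum_le_sum fun t ht => (ih t (mem_Ico.1 ht).2 (by grind)).trans_eq (div_eq_mul_inv _ _)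
      _ = M * ∑ t ∈ Ioo 1 k, ((t : ℝ) ^ 2)⁻¹ := by rw [← mul_sum]; rfl
      _ ≤ M * 1 := by gcongr; simpa [one_add_one_eq_two] using sum_Ioo_inv_sq_le (α := ℝ) 1 k
      _ = M := mul_one M
  -- the factor `1/2` in the recursion is what makes `3 p ≤ 1` sufficient
  have hkey : C + p / (2 * (1 - p)) * M ≤ M / 4 := by
    have hcoef : p / (2 * (1 - p)) ≤ 3 * p / 4 := by rw [div_le_iff₀ (by linarith)]; nlinarith
    have hC' : C = (1 - 3 * p) * M / 4 := by rw [hM]; field_simp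
    nlinarith [mul_le_mul_of_nonneg_right hcoef hM0]
  rw [le_div_iff₀ (by positivity)]
  have hcoef : 0 ≤ p / (2 * (1 - p)) := div_nonneg hp (by linarith)
  nlinarith [hrec k hk2, mul_le_mul_of_nonneg_left hsum hcoef]

theorem eag_initial_constant_le {x : ℝ} (hx : 0 ≤ x) (h3 : 3 * x ^ 2 < 1) :
    1 + x ^ 2 / (2 * (1 - x ^ 2)) * (x ^ 2 + (x * (1 + x + x ^ 2)) ^ 2) ≤ (1 + x) ^ 2 := by
  rw [← sub_nonneg]
  have hγ : 0 < 1 - x ^ 2 := by nlinarith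
  have : (1 + x) ^ 2 - (1 + x ^ 2 / (2 * (1 - x ^ 2)) * (x ^ 2 + (x * (1 + x + x ^ 2)) ^ 2)) =
      x * (2 * (1 - x ^ 2) * (2 + x) - x ^ 3 * (1 + (1 + x + x ^ 2) ^ 2)) / (2 * (1 - x ^ 2)) := by
    field_simp; ring
  rw [this]
  apply div_nonneg _ (by positivity)
  apply mul_nonneg hx
  nlinarith [sq_nonneg x, mul_nonneg hx (sq_nonneg x), mul_nonneg (sq_nonneg x) (sq_nonneg x)]

section

variable {E : Type*} [NormedAddCommGroup E] [InnerProductSpace ℝ E]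

noncomputable def anchoredPotential (F : E → E) (η : ℝ) (z₀ : E) (k : ℕ) (x : E) : ℝ :=
  η * (k : ℝ) ^ 2 / 2 * ‖F x‖ ^ 2 + k * ⟪F x, x - z₀⟫

/-- The one-step estimate of the potential, in terms of `r = k`, `a = F z_k`, `b = F z_{k+1/2}`,
`c = F z_{k+1}` and `w = z_k - z₀`. -/
theorem eag_step_inequality {η L r : ℝ} {a b c w : E} (hη : 0 < η) (hr : 0 ≤ r)
    (hp : η ^ 2 * L ^ 2 < 1)
    (hm : 0 ≤ ⟪c - a, -(η • b) - (1 / (r + 1)) • w⟫)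
    (hlip : ‖c - b‖ ≤ L * (η * ‖a - b‖)) :
    η * (r + 1) ^ 2 / 2 * ‖c‖ ^ 2 + (r + 1) * ((1 - 1 / (r + 1)) * ⟪c, w⟫ - η * ⟪c, b⟫) ≤
      η * r ^ 2 / 2 * ‖a‖ ^ 2 + r * ⟪a, w⟫ +
        η * (η ^ 2 * L ^ 2 / (2 * (1 - η ^ 2 * L ^ 2))) * ‖a‖ ^ 2 := by
  have hK : 0 < r + 1 := by linarith
  have hγ : 0 < 1 - η ^ 2 * L ^ 2 := by linarith
  have hm' : 0 ≤ -(η * ⟪c, b⟫) + η * ⟪a, b⟫ - 1 / (r + 1) * ⟪c, w⟫ + 1 / (r + 1) * ⟪a, w⟫ := by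
    convert hm using 1
    simp only [inner_sub_left, inner_sub_right, inner_neg_right, real_inner_smul_right]
    ring
  have hlip2 : ‖c - b‖ ^ 2 ≤ η ^ 2 * L ^ 2 * ‖a - b‖ ^ 2 := by
    calc ‖c - b‖ ^ 2 ≤ (L * (η * ‖a - b‖)) ^ 2 := pow_le_pow_left₀ (norm_nonneg _) hlip 2
      _ = η ^ 2 * L ^ 2 * ‖a - b‖ ^ 2 := by ring
  set s := (1 - η ^ 2 * L ^ 2) * (r + 1)
  -- `r (r+1)` times the monotonicity term, a square, and a multiple of the Lipschitz slack
  have key : (η * r ^ 2 / 2 * ‖a‖ ^ 2 + r * ⟪a, w⟫ +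
        η * (η ^ 2 * L ^ 2 / (2 * (1 - η ^ 2 * L ^ 2))) * ‖a‖ ^ 2)
      - (η * (r + 1) ^ 2 / 2 * ‖c‖ ^ 2 + (r + 1) * ((1 - 1 / (r + 1)) * ⟪c, w⟫ - η * ⟪c, b⟫))
      = r * (r + 1) * (-(η * ⟪c, b⟫) + η * ⟪a, b⟫ - 1 / (r + 1) * ⟪c, w⟫ + 1 / (r + 1) * ⟪a, w⟫)
        + η / (2 * (1 - η ^ 2 * L ^ 2)) * ‖a - s • (a - b)‖ ^ 2
        + η * (r + 1) ^ 2 / 2 * (η ^ 2 * L ^ 2 * ‖a - b‖ ^ 2 - ‖c - b‖ ^ 2) := by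
    rw [norm_sub_sq_real a (s • _), real_inner_smul_right, norm_smul, Real.norm_eq_abs, mul_pow,
      sq_abs, inner_sub_right, real_inner_self_eq_norm_sq, norm_sub_sq_real c b,
      norm_sub_sq_real a b]
    field_simp
    ring
  have h1 : 0 ≤ r * (r + 1) * (-(η * ⟪c, b⟫) + η * ⟪a, b⟫ - 1 / (r + 1) * ⟪c, w⟫
      + 1 / (r + 1) * ⟪a, w⟫) := mul_nonneg (by positivity) hm'
  have h2 : 0 ≤ η / (2 * (1 - η ^ 2 * L ^ 2)) * ‖a - s • (a - b)‖ ^ 2 := by positivity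
  have h3 : 0 ≤ η * (r + 1) ^ 2 / 2 * (η ^ 2 * L ^ 2 * ‖a - b‖ ^ 2 - ‖c - b‖ ^ 2) :=
    mul_nonneg (by positivity) (by linarith)
  linarith

theorem anchoredPotential_succ_le {F : E → E} {L η : ℝ}
    (hmono : ∀ z z', 0 ≤ ⟪F z - F z', z - z'⟫) (hlip : ∀ z z', ‖F z - F z'‖ ≤ L * ‖z - z'‖)
    (hη : 0 < η) (hp : η ^ 2 * L ^ 2 < 1) {z₀ x y x' : E} {k : ℕ}
    (hy : y = x - η • F x + (1 / ((k : ℝ) + 1)) • (z₀ - x))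
    (hx' : x' = x - η • F y + (1 / ((k : ℝ) + 1)) • (z₀ - x)) :
    anchoredPotential F η z₀ (k + 1) x' ≤
      anchoredPotential F η z₀ k x +
        η * (η ^ 2 * L ^ 2 / (2 * (1 - η ^ 2 * L ^ 2))) * ‖F x‖ ^ 2 := by
  have hstep : x' - x = -(η • F y) - (1 / ((k : ℝ) + 1)) • (x - z₀) := by rw [hx']; module
  have hx'y : x' - y = η • (F x - F y) := by rw [hx', hy]; module
  have hanchor : ⟪F x', x' - z₀⟫ = (1 - 1 / ((k : ℝ) + 1)) * ⟪F x', x - z₀⟫ - η * ⟪F x', F y⟫ := by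
    rw [show x' - z₀ = (1 - 1 / ((k : ℝ) + 1)) • (x - z₀) - η • F y by rw [hx']; module,
      inner_sub_right, real_inner_smul_right, real_inner_smul_right]
  have hm := hmono x' x
  rw [hstep] at hm
  have hl := hlip x' y
  rw [hx'y, norm_smul, Real.norm_eq_abs, abs_of_pos hη] at hl
  have hineq := eag_step_inequality hη (Nat.cast_nonneg k) hp hm hl
  unfold anchoredPotential
  push_cast
  rw [hanchor]
  linarith

theorem anchoredPotential_le_sum {F : E → E} {L η : ℝ}
    (hmono : ∀ z z', 0 ≤ ⟪F z - F z', z - z'⟫) (hlip : ∀ z z', ‖F z - F z'‖ ≤ L * ‖z - z'‖)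
    (hη : 0 < η) (hp : η ^ 2 * L ^ 2 < 1) {z zh : ℕ → E}
    (hzh : ∀ k : ℕ, zh k = z k - η • F (z k) + (1 / ((k : ℝ) + 1)) • (z 0 - z k))
    (hz : ∀ k : ℕ, z (k + 1) = z k - η • F (zh k) + (1 / ((k : ℝ) + 1)) • (z 0 - z k)) (k : ℕ) :
    anchoredPotential F η (z 0) k (z k) ≤
      η * (η ^ 2 * L ^ 2 / (2 * (1 - η ^ 2 * L ^ 2))) * ∑ t ∈ range k, ‖F (z t)‖ ^ 2 := by
  induction k with
  | zero => simp [anchoredPotential]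
  | succ k ih =>
    rw [sum_range_succ, mul_add]
    linarith [anchoredPotential_succ_le hmono hlip hη hp (hzh k) (hz k)]

theorem le_anchoredPotential {F : E → E} (hmono : ∀ z z', 0 ≤ ⟪F z - F z', z - z'⟫)
    {zstar : E} (hzstar : F zstar = 0) (η : ℝ) (z₀ : E) (k : ℕ) (x : E) :
    η * (k : ℝ) ^ 2 / 2 * ‖F x‖ ^ 2 - k * (‖z₀ - zstar‖ * ‖F x‖) ≤
      anchoredPotential F η z₀ k x := by
  have hsplit : ⟪F x, x - z₀⟫ = ⟪F x - F zstar, x - zstar⟫ + ⟪F x, zstar - z₀⟫ := by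
    rw [hzstar, sub_zero, ← inner_add_right, sub_add_sub_cancel]
  have hcs : -(‖F x‖ * ‖z₀ - zstar‖) ≤ ⟪F x, zstar - z₀⟫ := by
    rw [← norm_neg (z₀ - zstar), neg_sub]
    exact neg_le_of_abs_le (abs_real_inner_le_norm _ _)
  have hinner : -(‖z₀ - zstar‖ * ‖F x‖) ≤ ⟪F x, x - z₀⟫ := by
    linarith [hmono x zstar]
  unfold anchoredPotential
  nlinarith [mul_le_mul_of_nonneg_left hinner (Nat.cast_nonneg k : (0 : ℝ) ≤ k)]

theorem norm_apply_sub_smul_le {F : E → E} {L : ℝ} (hL : 0 ≤ L)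
    (hlip : ∀ z z', ‖F z - F z'‖ ≤ L * ‖z - z'‖) {zstar : E} (hzstar : F zstar = 0)
    {η : ℝ} (hη : 0 ≤ η) (x v : E) :
    ‖F (x - η • v)‖ ≤ L * (‖x - zstar‖ + η * ‖v‖) := by
  calc ‖F (x - η • v)‖ = ‖F (x - η • v) - F zstar‖ := by rw [hzstar, sub_zero]
    _ ≤ L * ‖(x - zstar) - η • v‖ := by rw [sub_right_comm]; exact hlip _ _
    _ ≤ L * (‖x - zstar‖ + η * ‖v‖) := by
      gcongr
      exact (norm_sub_le _ _).trans_eq (by rw [norm_smul, Real.norm_of_nonneg hη])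

theorem sq_mul_norm_sq_le_add_sum {F : E → E} {L η : ℝ}
    (hmono : ∀ z z', 0 ≤ ⟪F z - F z', z - z'⟫) (hlip : ∀ z z', ‖F z - F z'‖ ≤ L * ‖z - z'‖)
    (hη : 0 < η) (hp : η ^ 2 * L ^ 2 < 1) {zstar : E} (hzstar : F zstar = 0) {z zh : ℕ → E}
    (hzh : ∀ k : ℕ, zh k = z k - η • F (z k) + (1 / ((k : ℝ) + 1)) • (z 0 - z k))
    (hz : ∀ k : ℕ, z (k + 1) = z k - η • F (zh k) + (1 / ((k : ℝ) + 1)) • (z 0 - z k)) (k : ℕ) :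
    (k : ℝ) ^ 2 / 4 * ‖F (z k)‖ ^ 2 ≤ ‖z 0 - zstar‖ ^ 2 / η ^ 2 +
      η ^ 2 * L ^ 2 / (2 * (1 - η ^ 2 * L ^ 2)) * ∑ t ∈ range k, ‖F (z t)‖ ^ 2 := by
  have h := (le_anchoredPotential hmono hzstar η (z 0) k (z k)).trans
    (anchoredPotential_le_sum hmono hlip hη hp hzh hz k)
  rw [div_add' _ _ _ (by positivity), le_div_iff₀ (by positivity)]
  -- AM-GM: `k ‖z₀ - z*‖ ‖F z_k‖ ≤ η k² ‖F z_k‖² / 4 + ‖z₀ - z*‖² / η`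
  nlinarith [mul_le_mul_of_nonneg_left h hη.le,
    sq_nonneg (η * k * ‖F (z k)‖ - 2 * ‖z 0 - zstar‖)]

theorem eag_initial_terms_le {F : E → E} {L η : ℝ} (hL : 0 ≤ L)
    (hlip : ∀ z z', ‖F z - F z'‖ ≤ L * ‖z - z'‖) (hη : 0 < η) (h3 : 3 * (η ^ 2 * L ^ 2) < 1)
    {zstar : E} (hzstar : F zstar = 0) {z zh : ℕ → E}
    (hzh : ∀ k : ℕ, zh k = z k - η • F (z k) + (1 / ((k : ℝ) + 1)) • (z 0 - z k))
    (hz : ∀ k : ℕ, z (k + 1) = z k - η • F (zh k) + (1 / ((k : ℝ) + 1)) • (z 0 - z k)) :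
    ‖z 0 - zstar‖ ^ 2 / η ^ 2 + η ^ 2 * L ^ 2 / (2 * (1 - η ^ 2 * L ^ 2)) *
        (‖F (z 0)‖ ^ 2 + ‖F (z 1)‖ ^ 2) ≤ (1 + η * L) ^ 2 * ‖z 0 - zstar‖ ^ 2 / η ^ 2 := by
  set D := ‖z 0 - zstar‖
  have hzh0 : zh 0 = z 0 - η • F (z 0) := by simpa using hzh 0
  have hz1 : z 1 = z 0 - η • F (zh 0) := by simpa using hz 0
  have h0 : ‖F (z 0)‖ ≤ L * D := by simpa [hzstar] using hlip (z 0) zstar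
  have hh0 : ‖F (zh 0)‖ ≤ L * (D + η * (L * D)) := by
    rw [hzh0]
    exact (norm_apply_sub_smul_le hL hlip hzstar hη.le _ _).trans (by gcongr)
  have h1 : ‖F (z 1)‖ ≤ L * (D + η * (L * (D + η * (L * D)))) := by
    rw [hz1]
    exact (norm_apply_sub_smul_le hL hlip hzstar hη.le _ _).trans (by gcongr)
  have hsum : ‖F (z 0)‖ ^ 2 + ‖F (z 1)‖ ^ 2 ≤
      ((η * L) ^ 2 + (η * L * (1 + η * L + (η * L) ^ 2)) ^ 2) * (D ^ 2 / η ^ 2) := by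
    have e : ((η * L) ^ 2 + (η * L * (1 + η * L + (η * L) ^ 2)) ^ 2) * (D ^ 2 / η ^ 2) =
        (L * D) ^ 2 + (L * (D + η * (L * (D + η * (L * D))))) ^ 2 := by
      field_simp; ring
    rw [e]
    gcongr
  have hconst := eag_initial_constant_le (mul_nonneg hη.le hL) (by linarith [mul_pow η L 2])
  have hcf : 0 ≤ η ^ 2 * L ^ 2 / (2 * (1 - η ^ 2 * L ^ 2)) :=
    div_nonneg (by positivity) (by linarith)
  calc D ^ 2 / η ^ 2 + η ^ 2 * L ^ 2 / (2 * (1 - η ^ 2 * L ^ 2)) * (‖F (z 0)‖ ^ 2 + ‖F (z 1)‖ ^ 2)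
      ≤ D ^ 2 / η ^ 2 + η ^ 2 * L ^ 2 / (2 * (1 - η ^ 2 * L ^ 2)) *
          (((η * L) ^ 2 + (η * L * (1 + η * L + (η * L) ^ 2)) ^ 2) * (D ^ 2 / η ^ 2)) := by gcongr
    _ = (1 + (η * L) ^ 2 / (2 * (1 - (η * L) ^ 2)) *
          ((η * L) ^ 2 + (η * L * (1 + η * L + (η * L) ^ 2)) ^ 2)) * (D ^ 2 / η ^ 2) := by ring
    _ ≤ (1 + η * L) ^ 2 * (D ^ 2 / η ^ 2) := by gcongr
    _ = (1 + η * L) ^ 2 * D ^ 2 / η ^ 2 := by ring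

theorem eag_norm_sq_le {F : E → E} {L η : ℝ} (hL : 0 ≤ L)
    (hmono : ∀ z z', 0 ≤ ⟪F z - F z', z - z'⟫) (hlip : ∀ z z', ‖F z - F z'‖ ≤ L * ‖z - z'‖)
    (hη : 0 < η) (h3 : 3 * (η ^ 2 * L ^ 2) < 1) {zstar : E} (hzstar : F zstar = 0)
    {z zh : ℕ → E}
    (hzh : ∀ k : ℕ, zh k = z k - η • F (z k) + (1 / ((k : ℝ) + 1)) • (z 0 - z k))
    (hz : ∀ k : ℕ, z (k + 1) = z k - η • F (zh k) + (1 / ((k : ℝ) + 1)) • (z 0 - z k))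
    {T : ℕ} (hT : 1 ≤ T) :
    ‖F (z T)‖ ^ 2 ≤
      4 * ((1 + η * L) ^ 2 * ‖z 0 - zstar‖ ^ 2 / η ^ 2) / ((1 - 3 * (η ^ 2 * L ^ 2)) * T ^ 2) := by
  have hp : η ^ 2 * L ^ 2 < 1 := by nlinarith [sq_nonneg (η * L)]
  have hrec := sq_mul_norm_sq_le_add_sum hmono hlip hη hp hzstar hzh hz
  have hinit := eag_initial_terms_le hL hlip hη h3 hzstar hzh hz
  have hcf : 0 ≤ η ^ 2 * L ^ 2 / (2 * (1 - η ^ 2 * L ^ 2)) :=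
    div_nonneg (by positivity) (by linarith)
  refine le_div_sq_of_sq_mul_le_add_sum_s8 (q := fun t => ‖F (z t)‖ ^ 2) (by positivity) h3
    (by positivity) ?_ (fun k hk2 => ?_) T hT
  · have h1 := hrec 1
    simp only [sum_range_one, Nat.cast_one] at h1
    nlinarith [mul_nonneg hcf (sq_nonneg ‖F (z 1)‖)]
  · have hk := hrec k
    rw [← sum_range_add_sum_Ico _ hk2, sum_range_succ, sum_range_one] at hk
    nlinarith

end

theorem stmt_8 {n : ℕ}
    (F : EuclideanSpace ℝ (Fin n) → EuclideanSpace ℝ (Fin n))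
    (L η : ℝ) (hL : 0 < L)
    (hmono : ∀ z z', 0 ≤ ⟪F z - F z', z - z'⟫)
    (hlip : ∀ z z', ‖F z - F z'‖ ≤ L * ‖z - z'‖)
    (zstar : EuclideanSpace ℝ (Fin n)) (hzstar : F zstar = 0)
    (hη : 0 < η) (hηL : η < 1 / (Real.sqrt 3 * L))
    (z zh : ℕ → EuclideanSpace ℝ (Fin n))
    (hzh : ∀ k : ℕ, zh k = z k - η • F (z k) + (1/((k:ℝ)+1)) • (z 0 - z k))
    (hz : ∀ k : ℕ, z (k+1) = z k - η • F (zh k) + (1/((k:ℝ)+1)) • (z 0 - z k))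
    (D : ℝ) (hD : D = ‖z 0 - zstar‖) :
    (∀ T : ℕ, 1 ≤ T →
      ‖F (z T)‖^2 ≤ 4*(1+η*L)^2/(η^2*L^2*(1-3*η^2*L^2)) * (D^2*L^2/(T:ℝ)^2)) ∧
    (η = 1/(3*L) → ∀ T : ℕ, 1 ≤ T →
      ‖F (z T)‖^2 ≤ 96 * D^2 * L^2 / (T:ℝ)^2) := by
  have h3 : 3 * (η ^ 2 * L ^ 2) < 1 := by
    have hsqrt : η * (√3 * L) < 1 := by rwa [lt_div_iff₀ (by positivity)] at hηL
    have := pow_lt_pow_left₀ hsqrt (by positivity) two_ne_zero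
    rwa [mul_pow, mul_pow, Real.sq_sqrt zero_le_three, one_pow, ← mul_assoc, mul_comm _ 3,
      mul_assoc] at this
  have hbound : ∀ T : ℕ, 1 ≤ T →
      ‖F (z T)‖ ^ 2 ≤ 4 * (1 + η * L) ^ 2 / (η ^ 2 * L ^ 2 * (1 - 3 * η ^ 2 * L ^ 2)) *
        (D ^ 2 * L ^ 2 / (T : ℝ) ^ 2) := by
    intro T hT
    refine (eag_norm_sq_le hL.le hmono hlip hη h3 hzstar hzh hz hT).trans_eq ?_
    rw [hD]
    field_simp
  refine ⟨hbound, fun hη3 T hT => (hbound T hT).trans_eq ?_⟩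
  rw [hη3]
  field_simp
  ring
end

section
/- For the extragradient step z_{1/2} = Π_Z[z₀ − ηF(z₀)], z₁ = Π_Z[z₀ − ηF(z_{1/2})] with monotone L-Lipschitz F on a closed convex set Z ⊆ ℝⁿ, a solution z* of 0 ∈ F(z*) + N_Z(z*), and η ∈ (0, 1/L), define c₁ = (z₀ − ηF(z_{1/2}) − z₁)/η. Then ‖ηF(z₁) + ηc₁‖ ≤ ((1+ηL+η²L²)/√(1−η²L²))·‖z₀ − z*‖. -/
open RealInnerProductSpace

set_option maxHeartbeats 1000000 in
theorem stmt_9 {n : ℕ}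
    (Z : Set (EuclideanSpace ℝ (Fin n))) (hZc : IsClosed Z) (hZconv : Convex ℝ Z)
    (F : EuclideanSpace ℝ (Fin n) → EuclideanSpace ℝ (Fin n))
    (L η : ℝ) (hL : 0 < L)
    (hmono : ∀ z ∈ Z, ∀ z' ∈ Z, 0 ≤ ⟪F z - F z', z - z'⟫)
    (hlip : ∀ z ∈ Z, ∀ z' ∈ Z, ‖F z - F z'‖ ≤ L * ‖z - z'‖)
    (P : EuclideanSpace ℝ (Fin n) → EuclideanSpace ℝ (Fin n))
    (hP : ∀ x, P x ∈ Z ∧ ∀ y ∈ Z, ⟪x - P x, y - P x⟫ ≤ 0)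
    (zs : EuclideanSpace ℝ (Fin n)) (hzs : zs ∈ Z)
    (hsol : ∀ y ∈ Z, ⟪-F zs, y - zs⟫ ≤ 0)
    (hη : 0 < η) (hηL : η < 1 / L)
    (z0 : EuclideanSpace ℝ (Fin n)) (hz0 : z0 ∈ Z)
    (zh z1 c1 : EuclideanSpace ℝ (Fin n))
    (hzh : zh = P (z0 - η • F z0))
    (hz1 : z1 = P (z0 - η • F zh))
    (hc1 : c1 = (1/η) • (z0 - η • F zh - z1)) :
    ‖η • F z1 + η • c1‖ ≤
      (1 + η*L + η^2*L^2) / Real.sqrt (1 - η^2*L^2) * ‖z0 - zs‖ := by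
  have hA : 0 < η * L := mul_pos hη hL
  have hA1 : η * L < 1 := by
    have := (lt_div_iff₀ hL).mp hηL
    linarith
  have hc : (0:ℝ) < 1 - η^2*L^2 := by nlinarith
  -- memberships
  have hzhZ : zh ∈ Z := hzh ▸ (hP _).1
  have hz1Z : z1 ∈ Z := hz1 ▸ (hP _).1
  -- nonexpansiveness of P
  have nonexp : ∀ x y, ‖P x - P y‖ ≤ ‖x - y‖ := by
    intro x y
    have h1 : ⟪x - P x, P y - P x⟫ ≤ 0 := (hP x).2 _ (hP y).1
    have h2 : ⟪y - P y, P x - P y⟫ ≤ 0 := (hP y).2 _ (hP x).1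
    have key : ‖P x - P y‖^2 ≤ ⟪x - y, P x - P y⟫ := by
      have e : ⟪x - y, P x - P y⟫
          = -⟪x - P x, P y - P x⟫ - ⟪y - P y, P x - P y⟫ + ‖P x - P y‖^2 := by
        simp only [inner_sub_left, inner_sub_right, ← real_inner_self_eq_norm_sq]
        rw [real_inner_comm (P y) (P x)]
        ring_nf
      linarith [e ▸ le_refl (⟪x - y, P x - P y⟫ : ℝ)]
    have cs : ⟪x - y, P x - P y⟫ ≤ ‖x - y‖ * ‖P x - P y‖ := real_inner_le_norm _ _
    rcases eq_or_lt_of_le (norm_nonneg (P x - P y)) with h | h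
    · rw [← h]; exact norm_nonneg _
    · nlinarith
  -- norm of zh - z1
  have hb : ‖zh - z1‖ ≤ η * L * ‖z0 - zh‖ := by
    have := nonexp (z0 - η • F z0) (z0 - η • F zh)
    rw [← hzh, ← hz1] at this
    have e : (z0 - η • F z0) - (z0 - η • F zh) = η • (F zh - F z0) := by
      module
    rw [e, norm_smul] at this
    have hl := hlip zh hzhZ z0 hz0
    calc ‖zh - z1‖ ≤ ‖η‖ * ‖F zh - F z0‖ := this
      _ ≤ η * (L * ‖zh - z0‖) := by
          rw [Real.norm_eq_abs, abs_of_pos hη]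
          exact mul_le_mul_of_nonneg_left hl hη.le
      _ = η * L * ‖z0 - zh‖ := by rw [norm_sub_rev]; ring
  -- key extragradient bound
  have hkey : (1 - η^2*L^2) * ‖z0 - zh‖^2 ≤ ‖z0 - zs‖^2 := by
    have h1 : ⟪(z0 - η • F zh) - z1, zs - z1⟫ ≤ 0 := by
      have := (hP (z0 - η • F zh)).2 zs hzs
      rwa [← hz1] at this
    have h2 : ⟪(z0 - η • F z0) - zh, z1 - zh⟫ ≤ 0 := by
      have := (hP (z0 - η • F z0)).2 z1 hz1Z
      rwa [← hzh] at this
    have h3 : 0 ≤ ⟪F zh - F zs, zh - zs⟫ := hmono zh hzhZ zs hzs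
    have h4 : ⟪-F zs, zh - zs⟫ ≤ 0 := hsol zh hzhZ
    -- ⟪F zh, zs - zh⟫ ≤ 0
    have h5 : ⟪F zh, zs - zh⟫ ≤ 0 := by
      have e1 : ⟪F zh - F zs, zh - zs⟫ = ⟪F zh, zh - zs⟫ - ⟪F zs, zh - zs⟫ := by
        rw [inner_sub_left]
      have e2 : (⟪-F zs, zh - zs⟫:ℝ) = -⟪F zs, zh - zs⟫ := by rw [inner_neg_left]
      have e3 : (⟪F zh, zs - zh⟫:ℝ) = -⟪F zh, zh - zs⟫ := by
        rw [show zs - zh = -(zh - zs) by abel, inner_neg_right]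
      linarith
    -- expand h1
    have h1' : ⟪z0 - z1, zs - z1⟫ ≤ η * ⟪F zh, zs - z1⟫ := by
      have e : ⟪(z0 - η • F zh) - z1, zs - z1⟫
          = ⟪z0 - z1, zs - z1⟫ - η * ⟪F zh, zs - z1⟫ := by
        rw [show (z0 - η • F zh) - z1 = (z0 - z1) - η • F zh by abel,
          inner_sub_left, real_inner_smul_left]
      linarith
    have h2' : η * ⟪F z0, zh - z1⟫ ≤ ⟪z0 - zh, zh - z1⟫ := by
      have e : ⟪(z0 - η • F z0) - zh, z1 - zh⟫
          = -⟪z0 - zh, zh - z1⟫ + η * ⟪F z0, zh - z1⟫ := by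
        rw [show (z0 - η • F z0) - zh = (z0 - zh) - η • F z0 by abel,
          inner_sub_left, real_inner_smul_left,
          show z1 - zh = -(zh - z1) by abel, inner_neg_right, inner_neg_right]
        ring
      linarith
    have hsplit : (⟪F zh, zs - z1⟫:ℝ) = ⟪F zh, zs - zh⟫ + ⟪F zh, zh - z1⟫ := by
      rw [← inner_add_right]; congr 1; abel
    have hsplit2 : (⟪F zh, zh - z1⟫:ℝ) = ⟪F z0, zh - z1⟫ + ⟪F zh - F z0, zh - z1⟫ := by
      rw [inner_sub_left]; ring
    have cs : (⟪F zh - F z0, zh - z1⟫:ℝ) ≤ L * ‖z0 - zh‖ * ‖zh - z1‖ := by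
      calc (⟪F zh - F z0, zh - z1⟫:ℝ) ≤ ‖F zh - F z0‖ * ‖zh - z1‖ := real_inner_le_norm _ _
        _ ≤ L * ‖zh - z0‖ * ‖zh - z1‖ := by
            exact mul_le_mul_of_nonneg_right (hlip zh hzhZ z0 hz0) (norm_nonneg _)
        _ = L * ‖z0 - zh‖ * ‖zh - z1‖ := by rw [norm_sub_rev zh z0]
    -- norm identities
    have id1 : ‖z0 - zs‖^2 = ‖z0 - z1‖^2 - 2 * ⟪z0 - z1, zs - z1⟫ + ‖zs - z1‖^2 := by
      have := @norm_sub_sq_real (EuclideanSpace ℝ (Fin n)) _ _ (z0 - z1) (zs - z1)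
      rw [show (z0 - z1) - (zs - z1) = z0 - zs by abel] at this
      linarith
    have id2 : ‖z0 - z1‖^2 = ‖z0 - zh‖^2 + 2 * ⟪z0 - zh, zh - z1⟫ + ‖zh - z1‖^2 := by
      have := @norm_add_sq_real (EuclideanSpace ℝ (Fin n)) _ _ (z0 - zh) (zh - z1)
      rw [show (z0 - zh) + (zh - z1) = z0 - z1 by abel] at this
      linarith
    have hsq : 2 * (η * (L * ‖z0 - zh‖ * ‖zh - z1‖)) ≤ η^2*L^2*‖z0 - zh‖^2 + ‖zh - z1‖^2 := by
      nlinarith [sq_nonneg (η * L * ‖z0 - zh‖ - ‖zh - z1‖)]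
    have hm5 : η * ⟪F zh, zs - zh⟫ ≤ 0 := mul_nonpos_of_nonneg_of_nonpos hη.le h5
    have hcs : η * ⟪F zh - F z0, zh - z1⟫ ≤ η * (L * ‖z0 - zh‖ * ‖zh - z1‖) :=
      mul_le_mul_of_nonneg_left cs hη.le
    have hsplitη : η * ⟪F zh, zs - z1⟫ = η * ⟪F zh, zs - zh⟫ + η * ⟪F zh, zh - z1⟫ := by
      rw [hsplit]; ring
    have hsplit2η : η * ⟪F zh, zh - z1⟫ = η * ⟪F z0, zh - z1⟫ + η * ⟪F zh - F z0, zh - z1⟫ := by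
      rw [hsplit2]; ring
    have hzn := sq_nonneg ‖zs - z1‖
    ring_nf at hsq id1 id2 h1' h2' hsplitη hsplit2η hcs hm5 hzn ⊢
    linarith
  -- ‖z0 - zh‖ ≤ ‖z0 - zs‖ / sqrt(1 - η²L²)
  have hsqrtpos : 0 < Real.sqrt (1 - η^2*L^2) := Real.sqrt_pos.mpr hc
  have ha : ‖z0 - zh‖ ≤ ‖z0 - zs‖ / Real.sqrt (1 - η^2*L^2) := by
    rw [le_div_iff₀ hsqrtpos]
    have h1 : (‖z0 - zh‖ * Real.sqrt (1 - η^2*L^2))^2 ≤ ‖z0 - zs‖^2 := by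
      rw [mul_pow, Real.sq_sqrt hc.le]
      nlinarith
    have h2 := Real.sqrt_le_sqrt h1
    rwa [Real.sqrt_sq (by positivity), Real.sqrt_sq (norm_nonneg _)] at h2
  -- final assembly
  have hvec : η • F z1 + η • c1 = (z0 - zh) + (zh - z1) + η • (F z1 - F zh) := by
    rw [hc1, smul_smul, mul_one_div_cancel hη.ne', one_smul]
    module
  have hlast : η * ‖F z1 - F zh‖ ≤ η * L * (η * L * ‖z0 - zh‖) := by
    have h6 : ‖F z1 - F zh‖ ≤ L * ‖z1 - zh‖ := hlip z1 hz1Z zh hzhZ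
    have : ‖z1 - zh‖ = ‖zh - z1‖ := norm_sub_rev _ _
    nlinarith [hb, norm_nonneg (zh - z1)]
  have htri : ‖η • F z1 + η • c1‖ ≤ (1 + η*L + η^2*L^2) * ‖z0 - zh‖ := by
    rw [hvec]
    calc ‖(z0 - zh) + (zh - z1) + η • (F z1 - F zh)‖
        ≤ ‖(z0 - zh) + (zh - z1)‖ + ‖η • (F z1 - F zh)‖ := norm_add_le _ _
      _ ≤ ‖z0 - zh‖ + ‖zh - z1‖ + ‖η • (F z1 - F zh)‖ := by
          linarith [norm_add_le (z0 - zh) (zh - z1)]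
      _ ≤ ‖z0 - zh‖ + η * L * ‖z0 - zh‖ + η * L * (η * L * ‖z0 - zh‖) := by
          rw [norm_smul, Real.norm_eq_abs, abs_of_pos hη]
          linarith [hb, hlast]
      _ = (1 + η*L + η^2*L^2) * ‖z0 - zh‖ := by ring
  have hcoef : (0:ℝ) ≤ 1 + η*L + η^2*L^2 := by positivity
  calc ‖η • F z1 + η • c1‖ ≤ (1 + η*L + η^2*L^2) * ‖z0 - zh‖ := htri
    _ ≤ (1 + η*L + η^2*L^2) * (‖z0 - zs‖ / Real.sqrt (1 - η^2*L^2)) :=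
        mul_le_mul_of_nonneg_left ha hcoef
    _ = (1 + η*L + η^2*L^2) / Real.sqrt (1 - η^2*L^2) * ‖z0 - zs‖ := by ring
end

section
/- For the extragradient step as above with η ∈ (0, 1/L), the potential V₁ = ‖ηF(z₁)+ηc₁‖² + ⟨ηF(z₁)+ηc₁, z₁ − z₀⟩ satisfies V₁ ≤ [(1+ηL+η²L²)(2+2ηL+η²L²)/(1−η²L²)]·‖z₀ − z*‖². -/
/-!
With `a = ‖z₀ - z_{1/2}‖`, nonexpansiveness of the projection and the Lipschitz bound give
`‖z₁ - z_{1/2}‖ ≤ ηL a`, hence `‖z₁ - z₀‖ ≤ (1 + ηL) a` and, since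
`ηF(z₁) + ηc₁ = (z₀ - z₁) + η(F z₁ - F z_{1/2})`, also `‖ηF(z₁) + ηc₁‖ ≤ (1 + ηL + η²L²) a`;
Cauchy–Schwarz then bounds `V₁` by `(1 + ηL + η²L²)(2 + 2ηL + η²L²) a²`. The classical
extragradient descent estimate `‖z₁ - z*‖² ≤ ‖z₀ - z*‖² - (1 - η²L²) a²` turns `a²` into
`‖z₀ - z*‖² / (1 - η²L²)`.
-/

open RealInnerProductSpace

variable {E : Type*} [NormedAddCommGroup E] [InnerProductSpace ℝ E]

def IsProjectionOnto (Z : Set E) (P : E → E) : Prop :=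
  ∀ x, P x ∈ Z ∧ ∀ y ∈ Z, ⟪x - P x, y - P x⟫ ≤ 0

namespace IsProjectionOnto

variable {Z : Set E} {P : E → E}

theorem mem (hP : IsProjectionOnto Z P) (x : E) : P x ∈ Z := (hP x).1

theorem inner_le_zero (hP : IsProjectionOnto Z P) (x : E) {y : E} (hy : y ∈ Z) :
    ⟪x - P x, y - P x⟫ ≤ 0 :=
  (hP x).2 y hy

theorem norm_sub_sq_le_inner (hP : IsProjectionOnto Z P) (x y : E) :
    ‖P x - P y‖ ^ 2 ≤ ⟪x - y, P x - P y⟫ := by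
  have hx := hP.inner_le_zero x (hP.mem y)
  have hy := hP.inner_le_zero y (hP.mem x)
  rw [← real_inner_self_eq_norm_sq]
  simp only [inner_sub_left, inner_sub_right, real_inner_comm] at hx hy ⊢
  linarith

theorem norm_sub_le (hP : IsProjectionOnto Z P) (x y : E) : ‖P x - P y‖ ≤ ‖x - y‖ := by
  have h := (hP.norm_sub_sq_le_inner x y).trans (real_inner_le_norm _ _)
  nlinarith [norm_nonneg (P x - P y), norm_nonneg (x - y)]

theorem norm_step_sub_le (hP : IsProjectionOnto Z P) (x u v : E) {η : ℝ} (hη : 0 ≤ η) :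
    ‖P (x - η • u) - P (x - η • v)‖ ≤ η * ‖u - v‖ := by
  calc ‖P (x - η • u) - P (x - η • v)‖ ≤ ‖(x - η • u) - (x - η • v)‖ := hP.norm_sub_le _ _
    _ = η * ‖u - v‖ := by
      rw [sub_sub_sub_cancel_left, ← smul_sub, norm_smul, Real.norm_of_nonneg hη, norm_sub_rev]

end IsProjectionOnto

theorem norm_sub_sq_le_of_extragradient {x₀ xh x₁ xs u v : E} {η : ℝ} (hη : 0 ≤ η)
    (hh : ⟪x₀ - η • u - xh, x₁ - xh⟫ ≤ 0) (h₁ : ⟪x₀ - η • v - x₁, xs - x₁⟫ ≤ 0)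
    (hs : 0 ≤ ⟪v, xh - xs⟫) :
    ‖x₁ - xs‖ ^ 2 ≤ ‖x₀ - xs‖ ^ 2 - ‖x₀ - xh‖ ^ 2 - ‖x₁ - xh‖ ^ 2
      + 2 * η * ⟪u - v, x₁ - xh⟫ := by
  have hs' := mul_nonneg hη hs
  simp only [← real_inner_self_eq_norm_sq, inner_sub_left, inner_sub_right, inner_smul_left,
    real_inner_comm, RCLike.conj_to_real] at hh h₁ hs' ⊢
  linarith

theorem norm_sq_add_inner_le {w y : E} {p q : ℝ} (hw : ‖w‖ ≤ p) (hy : ‖y‖ ≤ q) :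
    ‖w‖ ^ 2 + ⟪w, y⟫ ≤ p * (p + q) := by
  have := real_inner_le_norm w y
  have := norm_nonneg w
  have := norm_nonneg y
  nlinarith

section Extragradient

variable {Z : Set E} {P F : E → E} {L η : ℝ} {z₀ zh z₁ : E}

theorem norm_extragradient_sub_le (hP : IsProjectionOnto Z P)
    (hlip : ∀ z ∈ Z, ∀ z' ∈ Z, ‖F z - F z'‖ ≤ L * ‖z - z'‖) (hη : 0 ≤ η) (hz₀ : z₀ ∈ Z)
    (hzh : zh = P (z₀ - η • F z₀)) (hz₁ : z₁ = P (z₀ - η • F zh)) :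
    ‖z₁ - zh‖ ≤ η * L * ‖z₀ - zh‖ := by
  have hzhZ : zh ∈ Z := hzh ▸ hP.mem _
  calc ‖z₁ - zh‖ ≤ η * ‖F zh - F z₀‖ := by
        rw [hz₁, hzh]; exact hP.norm_step_sub_le _ _ _ hη
    _ ≤ η * (L * ‖z₀ - zh‖) := by
        rw [norm_sub_rev]; exact mul_le_mul_of_nonneg_left (hlip z₀ hz₀ zh hzhZ) hη
    _ = η * L * ‖z₀ - zh‖ := by ring

theorem extragradient_descent (hP : IsProjectionOnto Z P)
    (hmono : ∀ z ∈ Z, ∀ z' ∈ Z, 0 ≤ ⟪F z - F z', z - z'⟫)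
    (hlip : ∀ z ∈ Z, ∀ z' ∈ Z, ‖F z - F z'‖ ≤ L * ‖z - z'‖)
    {zs : E} (hzs : zs ∈ Z) (hsol : ∀ y ∈ Z, ⟪-F zs, y - zs⟫ ≤ 0) (hη : 0 ≤ η) (hz₀ : z₀ ∈ Z)
    (hzh : zh = P (z₀ - η • F z₀)) (hz₁ : z₁ = P (z₀ - η • F zh)) :
    (1 - (η * L) ^ 2) * ‖z₀ - zh‖ ^ 2 ≤ ‖z₀ - zs‖ ^ 2 := by
  have hzhZ : zh ∈ Z := hzh ▸ hP.mem _
  have hz₁Z : z₁ ∈ Z := hz₁ ▸ hP.mem _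
  have hhalf : ⟪z₀ - η • F z₀ - zh, z₁ - zh⟫ ≤ 0 := by
    rw [hzh]; exact hP.inner_le_zero _ hz₁Z
  have hfull : ⟪z₀ - η • F zh - z₁, zs - z₁⟫ ≤ 0 := by
    rw [hz₁]; exact hP.inner_le_zero _ hzs
  have hFzh : 0 ≤ ⟪F zh, zh - zs⟫ := by
    have hm := hmono zh hzhZ zs hzs
    have hs := hsol zh hzhZ
    rw [inner_sub_left] at hm
    rw [inner_neg_left] at hs
    linarith
  have hcross : ⟪F z₀ - F zh, z₁ - zh⟫ ≤ L * ‖z₀ - zh‖ * ‖z₁ - zh‖ :=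
    (real_inner_le_norm _ _).trans
      (mul_le_mul_of_nonneg_right (hlip z₀ hz₀ zh hzhZ) (norm_nonneg _))
  have hb := norm_extragradient_sub_le hP hlip hη hz₀ hzh hz₁
  have hdesc := norm_sub_sq_le_of_extragradient hη hhalf hfull hFzh
  nlinarith [mul_le_mul_of_nonneg_left hcross hη, sq_nonneg (η * L * ‖z₀ - zh‖ - ‖z₁ - zh‖),
    sq_nonneg ‖z₁ - zs‖]

theorem norm_extragradient_sub_start_le (hP : IsProjectionOnto Z P)
    (hlip : ∀ z ∈ Z, ∀ z' ∈ Z, ‖F z - F z'‖ ≤ L * ‖z - z'‖) (hη : 0 ≤ η) (hz₀ : z₀ ∈ Z)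
    (hzh : zh = P (z₀ - η • F z₀)) (hz₁ : z₁ = P (z₀ - η • F zh)) :
    ‖z₁ - z₀‖ ≤ (1 + η * L) * ‖z₀ - zh‖ := by
  have := norm_sub_le_norm_sub_add_norm_sub z₁ zh z₀
  rw [norm_sub_rev zh z₀] at this
  linarith [norm_extragradient_sub_le hP hlip hη hz₀ hzh hz₁]

theorem norm_extragradient_residual_le (hP : IsProjectionOnto Z P)
    (hlip : ∀ z ∈ Z, ∀ z' ∈ Z, ‖F z - F z'‖ ≤ L * ‖z - z'‖) (hL : 0 ≤ L) (hη : 0 ≤ η)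
    (hz₀ : z₀ ∈ Z) (hzh : zh = P (z₀ - η • F z₀)) (hz₁ : z₁ = P (z₀ - η • F zh)) :
    ‖(z₀ - z₁) + η • (F z₁ - F zh)‖ ≤ (1 + η * L + η ^ 2 * L ^ 2) * ‖z₀ - zh‖ := by
  have hF : ‖η • (F z₁ - F zh)‖ ≤ η * (L * ‖z₁ - zh‖) := by
    rw [norm_smul, Real.norm_of_nonneg hη]
    exact mul_le_mul_of_nonneg_left (hlip z₁ (hz₁ ▸ hP.mem _) zh (hzh ▸ hP.mem _)) hη
  have htri := norm_add_le (z₀ - z₁) (η • (F z₁ - F zh))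
  rw [norm_sub_rev z₀ z₁] at htri
  nlinarith [norm_extragradient_sub_start_le hP hlip hη hz₀ hzh hz₁,
    mul_le_mul_of_nonneg_left (norm_extragradient_sub_le hP hlip hη hz₀ hzh hz₁) hL]

end Extragradient

theorem stmt_10_general {n : ℕ}
    (Z : Set (EuclideanSpace ℝ (Fin n)))
    (F : EuclideanSpace ℝ (Fin n) → EuclideanSpace ℝ (Fin n))
    (L η : ℝ)
    (hmono : ∀ z ∈ Z, ∀ z' ∈ Z, 0 ≤ ⟪F z - F z', z - z'⟫)
    (hlip : ∀ z ∈ Z, ∀ z' ∈ Z, ‖F z - F z'‖ ≤ L * ‖z - z'‖)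
    (P : EuclideanSpace ℝ (Fin n) → EuclideanSpace ℝ (Fin n))
    (hP : ∀ x, P x ∈ Z ∧ ∀ y ∈ Z, ⟪x - P x, y - P x⟫ ≤ 0)
    (zs : EuclideanSpace ℝ (Fin n)) (hzs : zs ∈ Z)
    (hsol : ∀ y ∈ Z, ⟪-F zs, y - zs⟫ ≤ 0)
    (hη : 0 < η) (hηL : η < 1 / L)
    (z0 : EuclideanSpace ℝ (Fin n)) (hz0 : z0 ∈ Z)
    (zh z1 c1 : EuclideanSpace ℝ (Fin n))
    (hzh : zh = P (z0 - η • F z0))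
    (hz1 : z1 = P (z0 - η • F zh))
    (hc1 : c1 = (1/η) • (z0 - η • F zh - z1)) :
    ‖η • F z1 + η • c1‖^2 + ⟪η • F z1 + η • c1, z1 - z0⟫ ≤
      (1 + η*L + η^2*L^2) * (2 + 2*η*L + η^2*L^2) / (1 - η^2*L^2) * ‖z0 - zs‖^2 := by
  have hL : 0 < L := one_div_pos.mp (hη.trans hηL)
  have hηL' : η * L < 1 := (lt_div_iff₀ hL).mp hηL
  have hw : η • F z1 + η • c1 = (z0 - z1) + η • (F z1 - F zh) := by
    rw [hc1, smul_smul, mul_one_div_cancel hη.ne', one_smul, smul_sub]; abel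
  have hV := norm_sq_add_inner_le
    (hw ▸ norm_extragradient_residual_le hP hlip hL.le hη.le hz0 hzh hz1)
    (norm_extragradient_sub_start_le hP hlip hη.le hz0 hzh hz1)
  have hdesc := extragradient_descent hP hmono hlip hzs hsol hη.le hz0 hzh hz1
  have hpos : 0 < 1 - η ^ 2 * L ^ 2 := by nlinarith [mul_pos hη hL]
  rw [div_mul_eq_mul_div, le_div_iff₀ hpos]
  nlinarith [mul_le_mul_of_nonneg_left hdesc
    (by positivity : (0 : ℝ) ≤ (1 + η * L + η ^ 2 * L ^ 2) * (2 + 2 * η * L + η ^ 2 * L ^ 2))]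

theorem stmt_10 {n : ℕ}
    (Z : Set (EuclideanSpace ℝ (Fin n))) (hZc : IsClosed Z) (hZconv : Convex ℝ Z)
    (F : EuclideanSpace ℝ (Fin n) → EuclideanSpace ℝ (Fin n))
    (L η : ℝ) (hL : 0 < L)
    (hmono : ∀ z ∈ Z, ∀ z' ∈ Z, 0 ≤ ⟪F z - F z', z - z'⟫)
    (hlip : ∀ z ∈ Z, ∀ z' ∈ Z, ‖F z - F z'‖ ≤ L * ‖z - z'‖)
    (P : EuclideanSpace ℝ (Fin n) → EuclideanSpace ℝ (Fin n))
    (hP : ∀ x, P x ∈ Z ∧ ∀ y ∈ Z, ⟪x - P x, y - P x⟫ ≤ 0)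
    (zs : EuclideanSpace ℝ (Fin n)) (hzs : zs ∈ Z)
    (hsol : ∀ y ∈ Z, ⟪-F zs, y - zs⟫ ≤ 0)
    (hη : 0 < η) (hηL : η < 1 / L)
    (z0 : EuclideanSpace ℝ (Fin n)) (hz0 : z0 ∈ Z)
    (zh z1 c1 : EuclideanSpace ℝ (Fin n))
    (hzh : zh = P (z0 - η • F z0))
    (hz1 : z1 = P (z0 - η • F zh))
    (hc1 : c1 = (1/η) • (z0 - η • F zh - z1)) :
    ‖η • F z1 + η • c1‖^2 + ⟪η • F z1 + η • c1, z1 - z0⟫ ≤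
      (1 + η*L + η^2*L^2) * (2 + 2*η*L + η^2*L^2) / (1 - η^2*L^2) * ‖z0 - zs‖^2 :=
  stmt_10_general Z F L η hmono hlip P hP zs hzs hsol hη hηL z0 hz0 zh z1 c1 hzh hz1 hc1
end

section
/- Let Z ⊆ ℝⁿ be closed convex, F monotone and L-Lipschitz on Z, η ∈ (0, 1/L). Define projected EAG: z_{k+1/2} = Π_Z[z_k − ηF(z_k) + (1/(k+1))(z₀ − z_k)], z_{k+1} = Π_Z[z_k − ηF(z_{k+1/2}) + (1/(k+1))(z₀ − z_k)], and c_k = (z_{k−1} − ηF(z_{k−1/2}) + (1/k)(z₀ − z_{k−1}) − z_k)/η ∈ N_Z(z_k). With V_k = (k(k+1)/2)‖ηF(z_k)+ηc_k‖² + k⟨ηF(z_k)+ηc_k, z_k − z₀⟩, for all k ≥ 1: V_{k+1} ≤ V_k + (η²L²/(1−η²L²))·‖ηF(z_{k+1}) + ηc_{k+1}‖². -/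
open RealInnerProductSpace

set_option maxHeartbeats 4000000 in
theorem stmt_11 {n : ℕ}
    (Z : Set (EuclideanSpace ℝ (Fin n))) (hZc : IsClosed Z) (hZconv : Convex ℝ Z)
    (F : EuclideanSpace ℝ (Fin n) → EuclideanSpace ℝ (Fin n))
    (L η : ℝ) (hL : 0 < L)
    (hmono : ∀ z ∈ Z, ∀ z' ∈ Z, 0 ≤ ⟪F z - F z', z - z'⟫)
    (hlip : ∀ z ∈ Z, ∀ z' ∈ Z, ‖F z - F z'‖ ≤ L * ‖z - z'‖)
    (P : EuclideanSpace ℝ (Fin n) → EuclideanSpace ℝ (Fin n))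
    (hP : ∀ x, P x ∈ Z ∧ ∀ y ∈ Z, ⟪x - P x, y - P x⟫ ≤ 0)
    (hη : 0 < η) (hηL : η < 1 / L)
    (z zh c : ℕ → EuclideanSpace ℝ (Fin n))
    (hz0 : z 0 ∈ Z)
    (hzh : ∀ k : ℕ, zh k = P (z k - η • F (z k) + (1/((k:ℝ)+1)) • (z 0 - z k)))
    (hz : ∀ k : ℕ, z (k+1) = P (z k - η • F (zh k) + (1/((k:ℝ)+1)) • (z 0 - z k)))
    (hc : ∀ k : ℕ, c (k+1) =
      (1/η) • (z k - η • F (zh k) + (1/((k:ℝ)+1)) • (z 0 - z k) - z (k+1)))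
    (V : ℕ → ℝ)
    (hV : ∀ k : ℕ, V k = (k:ℝ)*((k:ℝ)+1)/2 * ‖η • F (z k) + η • c k‖^2
      + (k:ℝ) * ⟪η • F (z k) + η • c k, z k - z 0⟫) :
    ∀ k : ℕ, 1 ≤ k →
      V (k+1) ≤ V k + η^2*L^2/(1-η^2*L^2) * ‖η • F (z (k+1)) + η • c (k+1)‖^2 := by
  intro k hk
  obtain ⟨m, rfl⟩ : ∃ m, k = m + 1 := ⟨k - 1, by omega⟩
  have hηL1 : η * L < 1 := by rw [lt_div_iff₀ hL] at hηL; linarith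
  have hL' : (0:ℝ) < 1 - η^2*L^2 := by nlinarith [mul_pos hη hL]
  generalize ht_def : η^2*L^2/(1-η^2*L^2) = t
  have ht : 0 < t := ht_def ▸ div_pos (by positivity) hL'
  have hrel : t*(1-η^2*L^2) = η^2*L^2 := by rw [← ht_def]; exact div_mul_cancel₀ _ hL'.ne'
  have hmem1 : z (m+1) ∈ Z := by rw [hz m]; exact (hP _).1
  have hmem2 : zh (m+1) ∈ Z := by rw [hzh (m+1)]; exact (hP _).1
  have hmem3 : z (m+1+1) ∈ Z := by rw [hz (m+1)]; exact (hP _).1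
  have hην : η * (1/η) = 1 := mul_one_div_cancel hη.ne'
  have herk : η • c (m+1) = z m - η • F (zh m) + (1/((m:ℝ)+1)) • (z 0 - z m) - z (m+1) := by
    rw [hc m, smul_smul, hην, one_smul]
  have herk2raw : η • c (m+1+1) = z (m+1) - η • F (zh (m+1)) + (1/(((m+1:ℕ):ℝ)+1)) • (z 0 - z (m+1)) - z (m+1+1) := by
    rw [hc (m+1), smul_smul, hην, one_smul]
  have herk2 : η • c (m+1+1) = z (m+1) - η • F (zh (m+1)) + (1/((m:ℝ)+1+1)) • (z 0 - z (m+1)) - z (m+1+1) := by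
    rw [herk2raw]; push_cast; ring_nf
  have hw1 : z (m+1) - η • F (z (m+1)) + (1/((m:ℝ)+1+1)) • (z 0 - z (m+1)) - zh (m+1)
      = z (m+1+1) - zh (m+1) + η • F (zh (m+1)) - η • F (z (m+1)) + η • c (m+1+1) := by
    linear_combination (norm := module) -herk2
  have hz0eq : z 0 = z (m+1) + ((m:ℝ)+1+1) • (z (m+1+1) - z (m+1) + η • F (zh (m+1)) + η • c (m+1+1)) := by
    have h2' : (1/((m:ℝ)+1+1)) • (z 0 - z (m+1)) = z (m+1+1) - z (m+1) + η • F (zh (m+1)) + η • c (m+1+1) := by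
      linear_combination (norm := module) -herk2
    have h3' := congrArg (fun v : EuclideanSpace ℝ (Fin n) => ((m:ℝ)+1+1) • v) h2'
    simp only [smul_smul] at h3'
    rw [mul_one_div, div_self (by positivity : ((m:ℝ)+1+1) ≠ 0), one_smul] at h3'
    linear_combination (norm := module) h3'
  have h1 := (hP (z (m+1) - η • F (z (m+1)) + (1/(((m+1:ℕ):ℝ)+1)) • (z 0 - z (m+1)))).2 (z (m+1+1)) hmem3
  rw [← hzh (m+1)] at h1
  push_cast at h1
  rw [hw1] at h1
  have h2 := (hP (z m - η • F (zh m) + (1/((m:ℝ)+1)) • (z 0 - z m))).2 (zh (m+1)) hmem2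
  rw [← hz m, ← herk] at h2
  have h3 := (hP (z (m+1) - η • F (zh (m+1)) + (1/(((m+1:ℕ):ℝ)+1)) • (z 0 - z (m+1)))).2 (z (m+1)) hmem1
  rw [← hz (m+1), ← herk2raw] at h3
  have t4 := hmono (z (m+1)) hmem1 (z (m+1+1)) hmem3
  have hS : 0 ≤ -⟪z (m+1+1) - zh (m+1) + η • F (zh (m+1)) - η • F (z (m+1)) + η • c (m+1+1), z (m+1+1) - zh (m+1)⟫ - ⟪η • c (m+1), zh (m+1) - z (m+1)⟫ - ⟪η • c (m+1+1), z (m+1) - z (m+1+1)⟫ + η * ⟪F (z (m+1)) - F (z (m+1+1)), z (m+1) - z (m+1+1)⟫ := by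
    have h5 := mul_nonneg hη.le t4
    linarith [h1, h2, h3, h5]
  have hQ : ‖η • F (zh (m+1)) - η • F (z (m+1+1))‖^2 ≤ η^2*L^2*‖zh (m+1) - z (m+1+1)‖^2 := by
    have hl := hlip (zh (m+1)) hmem2 (z (m+1+1)) hmem3
    have e1 : η • F (zh (m+1)) - η • F (z (m+1+1)) = η • (F (zh (m+1)) - F (z (m+1+1))) := (smul_sub _ _ _).symm
    rw [e1, norm_smul, Real.norm_eq_abs, abs_of_pos hη]
    have h0 : (0:ℝ) ≤ ‖F (zh (m+1)) - F (z (m+1+1))‖ := norm_nonneg _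
    have h0' : (0:ℝ) ≤ ‖zh (m+1) - z (m+1+1)‖ := norm_nonneg _
    have h6 := mul_le_mul_of_nonneg_left (mul_self_le_mul_self h0 hl) (sq_nonneg η)
    nlinarith [h6]
  have hM : 4*t*(V (m+1)) + 4*t^2*‖η • F (z (m+1+1)) + η • c (m+1+1)‖^2 - 4*t*(V (m+1+1)) = 4*t*((m:ℝ)+1)*((m:ℝ)+1+1)*(-⟪z (m+1+1) - zh (m+1) + η • F (zh (m+1)) - η • F (z (m+1)) + η • c (m+1+1), z (m+1+1) - zh (m+1)⟫ - ⟪η • c (m+1), zh (m+1) - z (m+1)⟫ - ⟪η • c (m+1+1), z (m+1) - z (m+1+1)⟫ + η * ⟪F (z (m+1)) - F (z (m+1+1)), z (m+1) - z (m+1+1)⟫) + (2*t*((m:ℝ)+1)*((m:ℝ)+1+1) + ((m:ℝ)+1+1)^2)*(η^2*L^2*‖zh (m+1) - z (m+1+1)‖^2 - ‖η • F (zh (m+1)) - η • F (z (m+1+1))‖^2) + 2*t*((m:ℝ)+1)*((m:ℝ)+1+1)*‖η • F (z (m+1)) + η • c (m+1) - η • F (zh (m+1)) - η • c (m+1+1)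 + zh (m+1) - z (m+1+1)‖^2 + η^2*L^2*((m:ℝ)+1+1)*((m:ℝ)+1-1)*‖zh (m+1) - z (m+1+1)‖^2 + ‖(2*t) • (η • F (z (m+1+1)) + η • c (m+1+1)) + ((m:ℝ)+1+1) • (η • F (zh (m+1)) - η • F (z (m+1+1)))‖^2 := by
    simp only [hV]
    push_cast
    rw [hz0eq]
    simp only [← real_inner_self_eq_norm_sq, inner_add_left, inner_add_right,
      inner_sub_left, inner_sub_right, real_inner_smul_left, real_inner_smul_right,
      real_inner_comm (zh (m+1)) (z (m+1)),
    real_inner_comm (z (m+1+1)) (z (m+1)),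
    real_inner_comm (F (z (m+1))) (z (m+1)),
    real_inner_comm (F (zh (m+1))) (z (m+1)),
    real_inner_comm (F (z (m+1+1))) (z (m+1)),
    real_inner_comm (c (m+1)) (z (m+1)),
    real_inner_comm (c (m+1+1)) (z (m+1)),
    real_inner_comm (z (m+1+1)) (zh (m+1)),
    real_inner_comm (F (z (m+1))) (zh (m+1)),
    real_inner_comm (F (zh (m+1))) (zh (m+1)),
    real_inner_comm (F (z (m+1+1))) (zh (m+1)),
    real_inner_comm (c (m+1)) (zh (m+1)),
    real_inner_comm (c (m+1+1)) (zh (m+1)),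
    real_inner_comm (F (z (m+1))) (z (m+1+1)),
    real_inner_comm (F (zh (m+1))) (z (m+1+1)),
    real_inner_comm (F (z (m+1+1))) (z (m+1+1)),
    real_inner_comm (c (m+1)) (z (m+1+1)),
    real_inner_comm (c (m+1+1)) (z (m+1+1)),
    real_inner_comm (F (zh (m+1))) (F (z (m+1))),
    real_inner_comm (F (z (m+1+1))) (F (z (m+1))),
    real_inner_comm (c (m+1)) (F (z (m+1))),
    real_inner_comm (c (m+1+1)) (F (z (m+1))),
    real_inner_comm (F (z (m+1+1))) (F (zh (m+1))),
    real_inner_comm (c (m+1)) (F (zh (m+1))),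
    real_inner_comm (c (m+1+1)) (F (zh (m+1))),
    real_inner_comm (c (m+1)) (F (z (m+1+1))),
    real_inner_comm (c (m+1+1)) (F (z (m+1+1))),
    real_inner_comm (c (m+1+1)) (c (m+1))]
    linear_combination (2*((m:ℝ)+1)*((m:ℝ)+1+1)*(⟪zh (m+1), zh (m+1)⟫ - 2*⟪z (m+1+1), zh (m+1)⟫ + ⟪z (m+1+1), z (m+1+1)⟫)) * hrel
  have hk1 : (0:ℝ) ≤ ((m:ℝ)+1) := by positivity
  have hk2 : (0:ℝ) ≤ ((m:ℝ)+1+1) := by positivity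
  have hA1 : 0 ≤ 4*t*((m:ℝ)+1)*((m:ℝ)+1+1)*(-⟪z (m+1+1) - zh (m+1) + η • F (zh (m+1)) - η • F (z (m+1)) + η • c (m+1+1), z (m+1+1) - zh (m+1)⟫ - ⟪η • c (m+1), zh (m+1) - z (m+1)⟫ - ⟪η • c (m+1+1), z (m+1) - z (m+1+1)⟫ + η * ⟪F (z (m+1)) - F (z (m+1+1)), z (m+1) - z (m+1+1)⟫) :=
    mul_nonneg (mul_nonneg (mul_nonneg (by linarith : (0:ℝ) ≤ 4*t) hk1) hk2) hS
  have hA2 : 0 ≤ (2*t*((m:ℝ)+1)*((m:ℝ)+1+1) + ((m:ℝ)+1+1)^2)*(η^2*L^2*‖zh (m+1) - z (m+1+1)‖^2 - ‖η • F (zh (m+1)) - η • F (z (m+1+1))‖^2) :=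
    mul_nonneg (add_nonneg (mul_nonneg (mul_nonneg (by linarith : (0:ℝ) ≤ 2*t) hk1) hk2) (by positivity)) (by linarith)
  have hA3 : 0 ≤ 2*t*((m:ℝ)+1)*((m:ℝ)+1+1)*‖η • F (z (m+1)) + η • c (m+1) - η • F (zh (m+1)) - η • c (m+1+1) + zh (m+1) - z (m+1+1)‖^2 :=
    mul_nonneg (mul_nonneg (mul_nonneg (by linarith : (0:ℝ) ≤ 2*t) hk1) hk2) (by positivity)
  have hA4 : 0 ≤ η^2*L^2*((m:ℝ)+1+1)*((m:ℝ)+1-1)*‖zh (m+1) - z (m+1+1)‖^2 :=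
    mul_nonneg (mul_nonneg (mul_nonneg (by positivity) hk2) (by simp)) (by positivity)
  have hA5 : 0 ≤ ‖(2*t) • (η • F (z (m+1+1)) + η • c (m+1+1)) + ((m:ℝ)+1+1) • (η • F (zh (m+1)) - η • F (z (m+1+1)))‖^2 := by positivity
  have hsum : 0 ≤ 4*t*(V (m+1)) + 4*t^2*‖η • F (z (m+1+1)) + η • c (m+1+1)‖^2 - 4*t*(V (m+1+1)) := by rw [hM]; linarith
  nlinarith [hsum, ht]
end

section
/- Let F : ℝⁿ → ℝⁿ be L-Lipschitz, A maximally monotone, and suppose E = F + A is ρ-comonotone: ⟨u−u', z−z'⟩ ≥ ρ‖u−u'‖² for all (z,u),(z',u') ∈ Graph(E). Consider the AS iterates z_{k+1/2} = z_k + (1/(k+1))(z₀−z_k) − (k(η+2ρ)/(k+1))(F(z_k)+c_k), z_{k+1} = J_{ηA}[z_k + (1/(k+1))(z₀−z_k) − ηF(z_{k+1/2}) − (2kρ/(k+1))(F(z_k)+c_k)], with c_{k+1} defined so that c_{k+1} ∈ A(z_{k+1}) (as the resolvent residual divided by η) and step size η > −2ρ, η < 1/L. Define U_k = [(k²/2)(1+2ρ/η)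 − (ρ/η)k]·‖ηF(z_k)+ηc_k‖² + k⟨ηF(z_k)+ηc_k, z_k−z₀⟩. Then for all k ≥ 1, U_{k+1} ≤ U_k; in fact U_k − U_{k+1} ≥ ((1−η²L²)(k+1)²/2)·‖z_{k+1} − z_{k+1/2}‖² ≥ 0. -/
open RealInnerProductSpace

private lemma key_id {V : Type*} [NormedAddCommGroup V] [InnerProductSpace ℝ V]
    (g h p Δ : V) (τ ρ η : ℝ) (hη : η ≠ 0) (hτ : τ + 1 ≠ 0) :
    ((τ^2/2*(1+2*ρ/η) - ρ/η*τ) * ‖g‖^2 + τ * ⟪g, p⟫)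
      - (((τ+1)^2/2*(1+2*ρ/η) - ρ/η*(τ+1)) * ‖h‖^2
        + (τ+1) * ⟪h, (-((1/(τ+1)) • p) - (2*ρ*τ/(η*(τ+1))) • g - h + Δ) + p⟫)
    = ((τ+1)^2/2) * (‖(τ/(τ+1)) • g - h + Δ‖^2 - ‖Δ‖^2)
      + τ*(τ+1) * (⟪h - g, -((1/(τ+1)) • p) - (2*ρ*τ/(η*(τ+1))) • g - h + Δ⟫
        - (ρ/η) * ‖h - g‖^2) := by
  simp only [← real_inner_self_eq_norm_sq]
  simp only [inner_add_left, inner_add_right, inner_sub_left, inner_sub_right,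
    inner_neg_left, inner_neg_right, real_inner_smul_left, real_inner_smul_right]
  simp only [real_inner_comm h g, real_inner_comm p g, real_inner_comm Δ g,
    real_inner_comm p h, real_inner_comm Δ h, real_inner_comm Δ p]
  field_simp
  ring

set_option maxHeartbeats 1000000 in
theorem stmt_15 {n : ℕ}
    (A : EuclideanSpace ℝ (Fin n) → Set (EuclideanSpace ℝ (Fin n)))
    (F Jη : EuclideanSpace ℝ (Fin n) → EuclideanSpace ℝ (Fin n))
    (L η ρ : ℝ) (hL : 0 < L) (hρ : ρ ≤ 0)
    (hη₁ : -2*ρ < η) (hη₂ : η < 1 / L)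
    (hlip : ∀ z z', ‖F z - F z'‖ ≤ L * ‖z - z'‖)
    (hAmono : ∀ z z' u u', u ∈ A z → u' ∈ A z' → 0 ≤ ⟪u - u', z - z'⟫)
    (hcomo : ∀ z z' a a', a ∈ A z → a' ∈ A z' →
      ρ * ‖(F z + a) - (F z' + a')‖^2 ≤ ⟪(F z + a) - (F z' + a'), z - z'⟫)
    (hJ_nonexp : ∀ x y, ‖Jη x - Jη y‖ ≤ ‖x - y‖)
    (hJ_res : ∀ x, (1/η) • (x - Jη x) ∈ A (Jη x))
    (z zh c : ℕ → EuclideanSpace ℝ (Fin n))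
    (hc0 : c 0 = 0)
    (hcA : ∀ k : ℕ, 1 ≤ k → c k ∈ A (z k))
    (hzh : ∀ k : ℕ, zh k = z k + (1/((k:ℝ)+1)) • (z 0 - z k)
      - ((k:ℝ)*(η+2*ρ)/((k:ℝ)+1)) • (F (z k) + c k))
    (hz : ∀ k : ℕ, z (k+1) = Jη (z k + (1/((k:ℝ)+1)) • (z 0 - z k)
      - η • F (zh k) - (2*(k:ℝ)*ρ/((k:ℝ)+1)) • (F (z k) + c k)))
    (hc : ∀ k : ℕ, c (k+1) = (1/η) • (z k + (1/((k:ℝ)+1)) • (z 0 - z k)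
      - η • F (zh k) - (2*(k:ℝ)*ρ/((k:ℝ)+1)) • (F (z k) + c k) - z (k+1)))
    (U : ℕ → ℝ)
    (hU : ∀ k : ℕ, U k = ((k:ℝ)^2/2*(1+2*ρ/η) - ρ/η*(k:ℝ))
        * ‖η • F (z k) + η • c k‖^2
      + (k:ℝ) * ⟪η • F (z k) + η • c k, z k - z 0⟫) :
    ∀ k : ℕ, 1 ≤ k →
      (1-η^2*L^2)*((k:ℝ)+1)^2/2 * ‖z (k+1) - zh k‖^2 ≤ U k - U (k+1) ∧
      U (k+1) ≤ U k := by
  have hη0 : 0 < η := by linarith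
  have hηne : η ≠ 0 := ne_of_gt hη0
  intro k hk
  have hk1 : (1:ℝ) ≤ (k:ℝ) := by exact_mod_cast hk
  have hτne : ((k:ℝ)+1) ≠ 0 := by positivity
  -- membership facts
  have hck1 : c (k+1) ∈ A (z (k+1)) := by
    rw [hc k, hz k]; exact hJ_res _
  have hckA : c k ∈ A (z k) := hcA k hk
  -- vector relations
  have hd : z (k+1) - zh k
      = ((k:ℝ)/((k:ℝ)+1)) • (η • F (z k) + η • c k)
        - (η • F (z (k+1)) + η • c (k+1))
        + (η • F (z (k+1)) - η • F (zh k)) := by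
    rw [hc k, hzh k]
    match_scalars <;> (field_simp; try ring)
  have hw : z (k+1) - z k
      = -((1/((k:ℝ)+1)) • (z k - z 0))
        - (2*ρ*(k:ℝ)/(η*((k:ℝ)+1))) • (η • F (z k) + η • c k)
        - (η • F (z (k+1)) + η • c (k+1))
        + (η • F (z (k+1)) - η • F (zh k)) := by
    rw [hc k]
    match_scalars <;> (field_simp; try ring)
  -- key identity
  have key := key_id (η • F (z k) + η • c k) (η • F (z (k+1)) + η • c (k+1))
    (z k - z 0) (η • F (z (k+1)) - η • F (zh k)) (k:ℝ) ρ η hηne hτne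
  rw [← hd, ← hw] at key
  have hzz : z (k+1) - z k + (z k - z 0) = z (k+1) - z 0 := by abel
  rw [hzz] at key
  -- comonotonicity bound
  have hmono := hcomo (z (k+1)) (z k) (c (k+1)) (c k) hck1 hckA
  have hhg : (η • F (z (k+1)) + η • c (k+1)) - (η • F (z k) + η • c k)
      = η • ((F (z (k+1)) + c (k+1)) - (F (z k) + c k)) := by module
  have hB : 0 ≤ ⟪(η • F (z (k+1)) + η • c (k+1)) - (η • F (z k) + η • c k),
      z (k+1) - z k⟫
      - (ρ/η) * ‖(η • F (z (k+1)) + η • c (k+1)) - (η • F (z k) + η • c k)‖^2 := by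
    rw [hhg, real_inner_smul_left, norm_smul, Real.norm_eq_abs, mul_pow, sq_abs]
    have hfs : (ρ/η) * (η^2 * ‖(F (z (k+1)) + c (k+1)) - (F (z k) + c k)‖^2)
        = η * (ρ * ‖(F (z (k+1)) + c (k+1)) - (F (z k) + c k)‖^2) := by
      field_simp
    rw [hfs]
    have := mul_le_mul_of_nonneg_left hmono hη0.le
    linarith
  -- Lipschitz bound
  have hΔn : ‖η • F (z (k+1)) - η • F (zh k)‖ = η * ‖F (z (k+1)) - F (zh k)‖ := by
    rw [← smul_sub, norm_smul, Real.norm_eq_abs, abs_of_pos hη0]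
  have hlipk := hlip (z (k+1)) (zh k)
  have hL2 : ‖η • F (z (k+1)) - η • F (zh k)‖^2 ≤ η^2 * L^2 * ‖z (k+1) - zh k‖^2 := by
    have h1 : ‖η • F (z (k+1)) - η • F (zh k)‖ ≤ η * (L * ‖z (k+1) - zh k‖) := by
      rw [hΔn]; exact mul_le_mul_of_nonneg_left hlipk hη0.le
    have h2 := pow_le_pow_left₀ (norm_nonneg _) h1 2
    calc ‖η • F (z (k+1)) - η • F (zh k)‖^2 ≤ (η * (L * ‖z (k+1) - zh k‖))^2 := h2
      _ = η^2 * L^2 * ‖z (k+1) - zh k‖^2 := by ring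
  -- put things together
  have hUk := hU k
  have hUk1 := hU (k+1)
  push_cast at hUk1
  have h1 : 0 ≤ (((k:ℝ)+1)^2/2) * (η^2*L^2*‖z (k+1) - zh k‖^2
      - ‖η • F (z (k+1)) - η • F (zh k)‖^2) :=
    mul_nonneg (by positivity) (by linarith)
  have h2 : 0 ≤ (k:ℝ)*((k:ℝ)+1) * (⟪(η • F (z (k+1)) + η • c (k+1))
      - (η • F (z k) + η • c k), z (k+1) - z k⟫
      - (ρ/η) * ‖(η • F (z (k+1)) + η • c (k+1)) - (η • F (z k) + η • c k)‖^2) :=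
    mul_nonneg (by positivity) hB
  have expand : ((((k:ℝ)+1)^2/2)) * (‖z (k+1) - zh k‖^2
        - ‖η • F (z (k+1)) - η • F (zh k)‖^2)
      = (1-η^2*L^2)*((k:ℝ)+1)^2/2 * ‖z (k+1) - zh k‖^2
        + (((k:ℝ)+1)^2/2) * (η^2*L^2*‖z (k+1) - zh k‖^2
          - ‖η • F (z (k+1)) - η • F (zh k)‖^2) := by ring
  have part1 : (1-η^2*L^2)*((k:ℝ)+1)^2/2 * ‖z (k+1) - zh k‖^2 ≤ U k - U (k+1) := by
    linarith [key, h1, h2]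
  refine ⟨part1, ?_⟩
  have hηL : η * L < 1 := (lt_div_iff₀ hL).mp hη₂
  have hηL0 : 0 < η * L := mul_pos hη0 hL
  have hfac : 0 ≤ 1 - η^2*L^2 := by nlinarith [mul_pos hη0 hL]
  have : 0 ≤ (1-η^2*L^2)*((k:ℝ)+1)^2/2 * ‖z (k+1) - zh k‖^2 := by
    apply mul_nonneg _ (sq_nonneg _)
    apply div_nonneg _ (by norm_num)
    exact mul_nonneg hfac (sq_nonneg _)
  linarith
end

section
/- Let F be L-Lipschitz, A maximally monotone, E = F+A be ρ-comonotone with ρ ∈ (−1/(2L), 0], and 0 ∈ E(z*). Run AS from z₀ with step size η ∈ (max(0,−2ρ), 1/L). Then for all T ≥ 1, min_{c ∈ A(z_T)} ‖F(z_T)+c‖² ≤ [4/((η+2ρ)²L²)]·(H₀²L²/T²), where H₀² = 4‖z₁−z₀‖² + ‖z₀−z*‖². -/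
set_option maxHeartbeats 1000000
open RealInnerProductSpace

section aux
variable {H : Type*} [NormedAddCommGroup H] [InnerProductSpace ℝ H]

noncomputable def potU (η ρ t : ℝ) (w d : H) : ℝ :=
  (η+2*ρ)*((η/2)*t^2 + ρ*t*(t-1)) * ‖w‖^2 + ((η+2*ρ)*t) * ⟪w, d⟫

lemma keyId (t η ρ : ℝ) (ht : t + 1 ≠ 0) (d w0 w1 e : H) :
    potU η ρ t w0 (-d)
      - potU η ρ (t+1) w1 (((1/(t+1)) • d - η • w1 + η • e - (2*t*ρ/(t+1)) • w0) - d)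
    = ((η+2*ρ)*t*(t+1)) *
        (⟪w1 - w0, (1/(t+1)) • d - η • w1 + η • e - (2*t*ρ/(t+1)) • w0⟫ - ρ*‖w1-w0‖^2)
      + (η*(η+2*ρ)*(t+1)^2/2) * (‖(t/(t+1)) • w0 - w1 + e‖^2 - ‖e‖^2) := by
  simp only [potU, ← real_inner_self_eq_norm_sq, inner_sub_left, inner_sub_right,
    inner_add_left, inner_add_right, real_inner_smul_left, real_inner_smul_right,
    inner_neg_left, inner_neg_right]
  rw [real_inner_comm w1 w0, real_inner_comm e w0, real_inner_comm e w1,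
    real_inner_comm d w0, real_inner_comm d w1]
  field_simp
  ring
end aux

theorem stmt_16 {n : ℕ}
    (A : EuclideanSpace ℝ (Fin n) → Set (EuclideanSpace ℝ (Fin n)))
    (F Jη : EuclideanSpace ℝ (Fin n) → EuclideanSpace ℝ (Fin n))
    (L η ρ : ℝ) (hL : 0 < L) (hρ₁ : -(1/(2*L)) < ρ) (hρ₂ : ρ ≤ 0)
    (hη₁ : max 0 (-2*ρ) < η) (hη₂ : η < 1 / L)
    (hlip : ∀ z z', ‖F z - F z'‖ ≤ L * ‖z - z'‖)
    (hAmono : ∀ z z' u u', u ∈ A z → u' ∈ A z' → 0 ≤ ⟪u - u', z - z'⟫)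
    (hcomo : ∀ z z' a a', a ∈ A z → a' ∈ A z' →
      ρ * ‖(F z + a) - (F z' + a')‖^2 ≤ ⟪(F z + a) - (F z' + a'), z - z'⟫)
    (hJ_nonexp : ∀ x y, ‖Jη x - Jη y‖ ≤ ‖x - y‖)
    (hJ_res : ∀ x, (1/η) • (x - Jη x) ∈ A (Jη x))
    (zs : EuclideanSpace ℝ (Fin n)) (hzs : -F zs ∈ A zs)
    (z zh c : ℕ → EuclideanSpace ℝ (Fin n))
    (hc0 : c 0 = 0)
    (hcA : ∀ k : ℕ, 1 ≤ k → c k ∈ A (z k))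
    (hzh : ∀ k : ℕ, zh k = z k + (1/((k:ℝ)+1)) • (z 0 - z k)
      - ((k:ℝ)*(η+2*ρ)/((k:ℝ)+1)) • (F (z k) + c k))
    (hz : ∀ k : ℕ, z (k+1) = Jη (z k + (1/((k:ℝ)+1)) • (z 0 - z k)
      - η • F (zh k) - (2*(k:ℝ)*ρ/((k:ℝ)+1)) • (F (z k) + c k)))
    (hc : ∀ k : ℕ, c (k+1) = (1/η) • (z k + (1/((k:ℝ)+1)) • (z 0 - z k)
      - η • F (zh k) - (2*(k:ℝ)*ρ/((k:ℝ)+1)) • (F (z k) + c k) - z (k+1)))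
    (H0sq : ℝ) (hH0 : H0sq = 4*‖z 1 - z 0‖^2 + ‖z 0 - zs‖^2) :
    ∀ T : ℕ, 1 ≤ T →
      ‖F (z T) + c T‖^2 ≤ 4/((η+2*ρ)^2*L^2) * (H0sq*L^2/(T:ℝ)^2) := by
  intro T hT
  have hη0 : 0 < η := lt_of_le_of_lt (le_max_left 0 (-2*ρ)) hη₁
  have h2r : 0 < η + 2*ρ := by
    have h := lt_of_le_of_lt (le_max_right 0 (-2*ρ)) hη₁; linarith
  have hηne : η ≠ 0 := ne_of_gt hη0
  have hηL : η * L ≤ 1 := by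
    rw [lt_div_iff₀ hL] at hη₂; linarith
  -- one-step decrease of the potential
  have hstep : ∀ k : ℕ, 1 ≤ k →
      potU η ρ ((k:ℝ)+1) (F (z (k+1)) + c (k+1)) (z (k+1) - z 0)
        ≤ potU η ρ (k:ℝ) (F (z k) + c k) (z k - z 0) := by
    intro k hk
    have ht1 : (0:ℝ) < (k:ℝ) + 1 := by positivity
    have h1 : η • c (k+1) = (z k + (1/((k:ℝ)+1)) • (z 0 - z k)
        - η • F (zh k) - (2*(k:ℝ)*ρ/((k:ℝ)+1)) • (F (z k) + c k)) - z (k+1) := by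
      rw [hc k, smul_smul, mul_one_div, div_self hηne, one_smul]
    have h1' : z (k+1) = (z k + (1/((k:ℝ)+1)) • (z 0 - z k)
        - η • F (zh k) - (2*(k:ℝ)*ρ/((k:ℝ)+1)) • (F (z k) + c k)) - η • c (k+1) := by
      rw [h1]; abel
    have hΔ : (1/((k:ℝ)+1)) • (z 0 - z k) - η • (F (z (k+1)) + c (k+1))
        + η • (F (z (k+1)) - F (zh k)) - (2*(k:ℝ)*ρ/((k:ℝ)+1)) • (F (z k) + c k)
        = z (k+1) - z k := by
      rw [h1']; module
    have hP : z (k+1) - zh k = η • (((k:ℝ)/((k:ℝ)+1)) • (F (z k) + c k)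
        - (F (z (k+1)) + c (k+1)) + (F (z (k+1)) - F (zh k))) := by
      rw [h1', hzh k]
      match_scalars <;> (field_simp; try ring)
    have key := keyId ((k:ℝ)) η ρ (ne_of_gt ht1) (z 0 - z k)
      (F (z k) + c k) (F (z (k+1)) + c (k+1)) (F (z (k+1)) - F (zh k))
    rw [hΔ] at key
    rw [show -(z 0 - z k) = z k - z 0 from neg_sub _ _] at key
    rw [show z (k+1) - z k - (z 0 - z k) = z (k+1) - z 0 from by abel] at key
    -- comonotonicity slack
    have hcm := hcomo (z (k+1)) (z k) (c (k+1)) (c k) (hcA (k+1) (by omega)) (hcA k hk)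
    -- Lipschitz slack
    have hle := hlip (z (k+1)) (zh k)
    have hnp : ‖z (k+1) - zh k‖ = η * ‖((k:ℝ)/((k:ℝ)+1)) • (F (z k) + c k)
        - (F (z (k+1)) + c (k+1)) + (F (z (k+1)) - F (zh k))‖ := by
      rw [hP, norm_smul, Real.norm_eq_abs, abs_of_pos hη0]
    have hee : ‖F (z (k+1)) - F (zh k)‖ ≤ ‖((k:ℝ)/((k:ℝ)+1)) • (F (z k) + c k)
        - (F (z (k+1)) + c (k+1)) + (F (z (k+1)) - F (zh k))‖ := by
      rw [hnp] at hle
      nlinarith [mul_le_mul_of_nonneg_right hηL (norm_nonneg (((k:ℝ)/((k:ℝ)+1)) • (F (z k) + c k)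
        - (F (z (k+1)) + c (k+1)) + (F (z (k+1)) - F (zh k)))), norm_nonneg (F (z (k+1)) - F (zh k))]
    have hsq : ‖F (z (k+1)) - F (zh k)‖^2 ≤ ‖((k:ℝ)/((k:ℝ)+1)) • (F (z k) + c k)
        - (F (z (k+1)) + c (k+1)) + (F (z (k+1)) - F (zh k))‖^2 :=
      pow_le_pow_left₀ (norm_nonneg _) hee 2
    have hb1 : (0:ℝ) ≤ (η+2*ρ)*(k:ℝ)*((k:ℝ)+1) := by positivity
    have prod1 : (0:ℝ) ≤ ((η+2*ρ)*(k:ℝ)*((k:ℝ)+1)) *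
        (⟪(F (z (k+1)) + c (k+1)) - (F (z k) + c k), z (k+1) - z k⟫
          - ρ*‖(F (z (k+1)) + c (k+1)) - (F (z k) + c k)‖^2) :=
      mul_nonneg hb1 (by linarith)
    have prod2 : (0:ℝ) ≤ (η*(η+2*ρ)*((k:ℝ)+1)^2/2) *
        (‖((k:ℝ)/((k:ℝ)+1)) • (F (z k) + c k)
          - (F (z (k+1)) + c (k+1)) + (F (z (k+1)) - F (zh k))‖^2
          - ‖F (z (k+1)) - F (zh k)‖^2) :=
      mul_nonneg (by positivity) (by linarith)
    linarith [key, prod1, prod2]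
  -- potential is below its value at 1
  have hmono : ∀ m : ℕ, 1 ≤ m →
      potU η ρ ((m:ℝ)) (F (z m) + c m) (z m - z 0)
        ≤ potU η ρ ((1:ℕ):ℝ) (F (z 1) + c 1) (z 1 - z 0) := by
    intro m hm
    induction m with
    | zero => omega
    | succ p ih =>
      by_cases hp : 1 ≤ p
      · have h := hstep p hp
        have := ih hp
        push_cast
        push_cast at this
        linarith
      · have : p = 0 := by omega
        subst this
        norm_num
  -- bound on potU at 1
  have hzh0 : zh 0 = z 0 := by
    rw [hzh 0]; push_cast; simp
  have hw1 : F (z 1) + c 1 = (F (z 1) - F (z 0)) + (1/η) • (z 0 - z 1) := by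
    rw [hc 0, hzh0]; push_cast
    match_scalars <;> (field_simp; try ring)
  have hnw1 : η * ‖F (z 1) + c 1‖ ≤ 2 * ‖z 1 - z 0‖ := by
    rw [hw1]
    have h2 := norm_add_le (F (z 1) - F (z 0)) ((1/η) • (z 0 - z 1))
    have h3 := hlip (z 1) (z 0)
    have h4 : ‖(1/η) • (z 0 - z 1)‖ = (1/η) * ‖z 1 - z 0‖ := by
      rw [norm_smul, Real.norm_eq_abs, abs_of_pos (by positivity), norm_sub_rev]
    have h4' : η * ‖(1/η) • (z 0 - z 1)‖ = ‖z 1 - z 0‖ := by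
      rw [h4]; field_simp
    nlinarith [mul_le_mul_of_nonneg_left h2 hη0.le, norm_nonneg (z 1 - z 0),
      mul_le_mul_of_nonneg_left h3 hη0.le,
      mul_le_mul_of_nonneg_right hηL (norm_nonneg (z 1 - z 0))]
  have hU1 : potU η ρ ((1:ℕ):ℝ) (F (z 1) + c 1) (z 1 - z 0) ≤ 4*‖z 1 - z 0‖^2 := by
    simp only [potU]
    push_cast
    have hip := real_inner_le_norm (F (z 1) + c 1) (z 1 - z 0)
    have hx0 := norm_nonneg (F (z 1) + c 1)
    have hd0 := norm_nonneg (z 1 - z 0)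
    nlinarith [mul_le_mul_of_nonneg_right hnw1 hx0, mul_le_mul_of_nonneg_right hnw1 hd0,
      mul_nonneg hx0 hd0, mul_nonneg (mul_nonneg hx0 hd0) h2r.le,
      mul_le_mul_of_nonneg_left hip h2r.le]
  -- lower bound at T
  have hT1 : (1:ℝ) ≤ (T:ℝ) := by exact_mod_cast hT
  have hcm := hcomo (z T) zs (c T) (-F zs) (hcA T hT) hzs
  simp only [add_neg_cancel, sub_zero] at hcm
  have hsplit : ⟪F (z T) + c T, z T - z 0⟫
      = ⟪F (z T) + c T, z T - zs⟫ + ⟪F (z T) + c T, zs - z 0⟫ := by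
    rw [← inner_add_right]
    rw [show z T - zs + (zs - z 0) = z T - z 0 from by abel]
  have hip2 : -(‖F (z T) + c T‖ * ‖z 0 - zs‖) ≤ ⟪F (z T) + c T, zs - z 0⟫ := by
    have h := real_inner_le_norm (F (z T) + c T) (z 0 - zs)
    rw [show zs - z 0 = -(z 0 - zs) from by abel, inner_neg_right]
    linarith
  have hbT : (0:ℝ) ≤ (η+2*ρ)*(T:ℝ) := by positivity
  have hlow : ((η+2*ρ)^2*(T:ℝ)^2/4) * ‖F (z T) + c T‖^2 - ‖z 0 - zs‖^2
      ≤ potU η ρ ((T:ℝ)) (F (z T) + c T) (z T - z 0) := by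
    simp only [potU, hsplit]
    nlinarith [mul_le_mul_of_nonneg_left hcm hbT,
      mul_le_mul_of_nonneg_left hip2 hbT,
      sq_nonneg ((η+2*ρ)*(T:ℝ)/2 * ‖F (z T) + c T‖ - ‖z 0 - zs‖)]
  have hfin : ((η+2*ρ)^2*(T:ℝ)^2/4) * ‖F (z T) + c T‖^2 ≤ H0sq := by
    have h := hmono T hT
    rw [hH0]; linarith
  have hrw : 4/((η+2*ρ)^2*L^2) * (H0sq*L^2/(T:ℝ)^2)
      = 4*H0sq/((η+2*ρ)^2*(T:ℝ)^2) := by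
    have hTne : (T:ℝ) ≠ 0 := by positivity
    field_simp
  rw [hrw, le_div_iff₀ (by positivity)]
  nlinarith [hfin]
end

section
/- Let F be L-Lipschitz, A maximally monotone, E = F+A ρ-comonotone with ρ ≤ 0 and 0 ∈ E(z*), and let c_T ∈ A(z_T). Then the potential value U_T = [(T²/2)(1+2ρ/η) − (ρ/η)T]·‖ηF(z_T)+ηc_T‖² + T⟨ηF(z_T)+ηc_T, z_T−z₀⟩ satisfies U_T ≥ (η(η+2ρ)T²/4)·‖F(z_T)+c_T‖² − (η/(η+2ρ))·‖z₀−z*‖², for any η > −2ρ. -/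
open RealInnerProductSpace

theorem stmt_17 {n : ℕ}
    (A : EuclideanSpace ℝ (Fin n) → Set (EuclideanSpace ℝ (Fin n)))
    (F : EuclideanSpace ℝ (Fin n) → EuclideanSpace ℝ (Fin n))
    (L η ρ : ℝ) (hL : 0 < L) (hρ : ρ ≤ 0) (hη : -2*ρ < η)
    (hlip : ∀ z z', ‖F z - F z'‖ ≤ L * ‖z - z'‖)
    (hAmono : ∀ z z' u u', u ∈ A z → u' ∈ A z' → 0 ≤ ⟪u - u', z - z'⟫)
    (hcomo : ∀ z z' a a', a ∈ A z → a' ∈ A z' →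
      ρ * ‖(F z + a) - (F z' + a')‖^2 ≤ ⟪(F z + a) - (F z' + a'), z - z'⟫)
    (zs : EuclideanSpace ℝ (Fin n)) (hzs : -F zs ∈ A zs)
    (z₀ zT cT : EuclideanSpace ℝ (Fin n)) (hcT : cT ∈ A zT)
    (T : ℕ) (hT : 1 ≤ T) :
    η*(η+2*ρ)*(T:ℝ)^2/4 * ‖F zT + cT‖^2 - η/(η+2*ρ) * ‖z₀ - zs‖^2 ≤
      ((T:ℝ)^2/2*(1+2*ρ/η) - ρ/η*(T:ℝ)) * ‖η • F zT + η • cT‖^2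
        + (T:ℝ) * ⟪η • F zT + η • cT, zT - z₀⟫ := by
  set w := F zT + cT with hw
  have hη2 : 0 < η + 2*ρ := by linarith
  have hηpos : 0 < η := by linarith
  have hco := hcomo zT zs cT (-F zs) hcT hzs
  simp only [add_neg_cancel, sub_zero] at hco
  have hsplit : ⟪w, zT - z₀⟫ = ⟪w, zT - zs⟫ + ⟪w, zs - z₀⟫ := by
    rw [← inner_add_right]; congr 1; abel
  have hcs : -(‖w‖ * ‖zs - z₀‖) ≤ ⟪w, zs - z₀⟫ := by
    have h := abs_real_inner_le_norm w (zs - z₀)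
    have := neg_abs_le (⟪w, zs - z₀⟫ : ℝ)
    linarith
  have hnr : ‖zs - z₀‖ = ‖z₀ - zs‖ := norm_sub_rev _ _
  have hsmul : η • F zT + η • cT = η • w := by rw [hw, smul_add]
  rw [hsmul]
  have hnorm : ‖η • w‖^2 = η^2 * ‖w‖^2 := by
    rw [norm_smul]; simp [mul_pow, abs_of_pos hηpos]
  have hin : ⟪η • w, zT - z₀⟫ = η * ⟪w, zT - z₀⟫ := real_inner_smul_left _ _ _
  rw [hnorm, hin]
  have hTpos : (1:ℝ) ≤ (T:ℝ) := by exact_mod_cast hT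
  have hcoef : ((T:ℝ)^2/2*(1+2*ρ/η) - ρ/η*(T:ℝ)) * (η^2*‖w‖^2)
      = ((T:ℝ)^2/2*(η*(η+2*ρ)) - ρ*η*(T:ℝ)) * ‖w‖^2 := by
    field_simp
  rw [hcoef, sub_le_iff_le_add, ← sub_le_iff_le_add',
    div_mul_eq_mul_div η (η+2*ρ) (‖z₀ - zs‖^2), le_div_iff₀ hη2]
  have hclear : 0 ≤ η*((η+2*ρ)*(T:ℝ)*‖w‖/2 - ‖z₀ - zs‖)^2 :=
    mul_nonneg hηpos.le (sq_nonneg _)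
  rw [hsplit]
  rw [← hw] at hco
  rw [hnr] at hcs
  have hT0 : (0:ℝ) ≤ η*(η+2*ρ)*(T:ℝ) := by positivity
  nlinarith [mul_le_mul_of_nonneg_left hco hT0,
    mul_le_mul_of_nonneg_left hcs hT0,
    sq_nonneg ‖w‖, norm_nonneg w, norm_nonneg (z₀ - zs)]
end
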